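/- arXiv:math/0110143 — 9 statements merged into one kernel-verified Lean document; each statement's English description precedes it below -/
import Mathlib

section
/- Let each card in an infinite deck have an i.i.d. label drawn from the geometric distribution G_p on ℕ⁺ with Prob[label = k] = (1-p)p^{k-1}. Two players independently draw initial secret numbers from G_p and each performs the Kruskal counting procedure: starting at position equal to the initial secret number, the player repeatedly jumps forward by the label of the card at the current position. Let t be the first position (card number) that is a key position (visited position) for both players, with t = ∞ if no common key position occurs. Then for every N ≥ 1, Prob[t > N] = p^N (2-p)^N. -/
open MeasureTheory ProbabilityTheory

/-- The sequence of key positions of a player with secret number `s` on a deck whose card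
at position `m` has label `v m`: the first key position is `s`, and each subsequent key
position is obtained by jumping forward by the label of the current key card. -/
def keySeq (v : ℕ → ℕ) (s : ℕ) : ℕ → ℕ
  | 0 => s
  | n + 1 => keySeq v s n + v (keySeq v s n)

namespace KruskalAux

/-! ### Combinatorial layer -/

/-- No common key among the next `N` positions, for fronts `a`, `b` and relative deck `v`
(`v i` is the label at relative position `i+1`). -/
def gd : ℕ → ℕ → ℕ → (ℕ → ℕ) → Bool
  | 0, _, _, _ => true
  | N+1, a, b, v => (!(a == 1 && b == 1)) &&
      gd N (if a = 1 then v 0 else a - 1) (if b = 1 then v 0 else b - 1) (fun i => v (i+1))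

lemma gd_succ (N a b : ℕ) (v : ℕ → ℕ) :
    gd (N+1) a b v = true ↔ ¬(a = 1 ∧ b = 1) ∧
      gd N (if a = 1 then v 0 else a - 1) (if b = 1 then v 0 else b - 1)
        (fun i => v (i+1)) = true := by
  simp only [gd, Bool.and_eq_true, Bool.not_eq_true', Bool.and_eq_false_iff,
    beq_eq_false_iff_ne, ne_eq]
  tauto

lemma gd_congr : ∀ (N a b : ℕ) (v w : ℕ → ℕ), (∀ i < N, v i = w i) →
    gd N a b v = gd N a b w
  | 0, _, _, _, _, _ => rfl
  | N+1, a, b, v, w, h => by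
    have h0 : v 0 = w 0 := h 0 (Nat.succ_pos _)
    simp only [gd, h0]
    rw [gd_congr N _ _ (fun i => v (i+1)) (fun i => w (i+1))
      (fun i hi => h (i+1) (by omega))]

lemma keySeq_ge (v : ℕ → ℕ) (s : ℕ) : ∀ n, s ≤ keySeq v s n
  | 0 => le_refl s
  | n+1 => le_trans (keySeq_ge v s n) (Nat.le_add_right _ _)

lemma keySeq_succ (v : ℕ → ℕ) (s : ℕ) : ∀ n, keySeq v s (n+1) = keySeq v (s + v s) n
  | 0 => rfl
  | n+1 => by
    show keySeq v s (n+1) + v (keySeq v s (n+1)) = _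
    rw [keySeq_succ v s n]; rfl

lemma keySeq_shift (v : ℕ → ℕ) (t : ℕ) (ht : 1 ≤ t) :
    ∀ n, keySeq (fun i => v (i+1)) (t-1) n + 1 = keySeq v t n
  | 0 => by show t - 1 + 1 = t; omega
  | n+1 => by
    show keySeq (fun i => v (i+1)) (t-1) n + v (keySeq (fun i => v (i+1)) (t-1) n + 1) + 1 = _
    rw [keySeq_shift v t ht n]
    show _ = keySeq v t n + v (keySeq v t n)
    have := keySeq_shift v t ht n
    omega

/-- single-player shift lemma -/
lemma key_shift (v : ℕ → ℕ) (s : ℕ) (hs : 1 ≤ s) (m : ℕ) :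
    (∃ n, keySeq v s n = m + 1) ↔
      ((m = 0 ∧ s = 1) ∨ ∃ n, keySeq (fun i => v (i+1))
        (if s = 1 then v 1 else s - 1) n = m) := by
  by_cases h1 : s = 1
  · subst h1
    rw [if_pos rfl]
    rcases Nat.eq_zero_or_pos m with hm | hm
    · subst hm
      constructor
      · intro _; exact Or.inl ⟨rfl, rfl⟩
      · intro _; exact ⟨0, rfl⟩
    · constructor
      · rintro ⟨n, hn⟩
        right
        match n, hn with
        | 0, hn => simp [keySeq] at hn; omega
        | n+1, hn =>
          rw [keySeq_succ] at hn
          refine ⟨n, ?_⟩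
          have hsh := keySeq_shift v (1 + v 1) (by omega) n
          have : 1 + v 1 - 1 = v 1 := by omega
          rw [this] at hsh
          omega
      · rintro (⟨hm0, _⟩ | ⟨n, hn⟩)
        · omega
        · refine ⟨n + 1, ?_⟩
          rw [keySeq_succ]
          have hsh := keySeq_shift v (1 + v 1) (by omega) n
          have : 1 + v 1 - 1 = v 1 := by omega
          rw [this] at hsh
          omega
  · simp only [if_neg h1]
    have hs2 : 2 ≤ s := by omega
    constructor
    · rintro ⟨n, hn⟩
      right
      refine ⟨n, ?_⟩
      have := keySeq_shift v s hs n
      omega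
    · rintro (⟨_, h⟩ | ⟨n, hn⟩)
      · omega
      · refine ⟨n, ?_⟩
        have := keySeq_shift v s hs n
        omega

/-- The key equivalence between the recursive predicate and the `keySeq` formulation. -/
lemma gd_iff : ∀ (N : ℕ) (v : ℕ → ℕ) (s s' : ℕ), 1 ≤ s → 1 ≤ s' →
    (∀ i, 1 ≤ i → i ≤ N → 1 ≤ v i) →
    (gd N s s' (fun i => v (i+1)) = true ↔
      ∀ m ≤ N, ¬((∃ n, keySeq v s n = m) ∧ (∃ n, keySeq v s' n = m)))
  | 0, v, s, s', hs, hs', _ => by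
    simp only [Nat.le_zero, gd]
    constructor
    · rintro - m rfl ⟨⟨n, hn⟩, -⟩
      have := keySeq_ge v s n
      omega
    · intro _; trivial
  | N+1, v, s, s', hs, hs', hv => by
    have hv1 : 1 ≤ v 1 := hv 1 le_rfl (by omega)
    set a := if s = 1 then v 1 else s - 1 with ha
    set b := if s' = 1 then v 1 else s' - 1 with hb
    have hav : 1 ≤ a := by rw [ha]; split <;> omega
    have hbv : 1 ≤ b := by rw [hb]; split <;> omega
    have hIH := gd_iff N (fun i => v (i+1)) a b hav hbv
      (fun i hi1 hiN => hv (i+1) (by omega) (by omega))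
    rw [gd_succ]
    show (¬(s = 1 ∧ s' = 1) ∧ gd N a b (fun i => v (i+1+1)) = true) ↔ _
    have hfe : (fun i => v (i+1+1)) = (fun i => (fun j => v (j+1)) (i+1)) := rfl
    rw [hfe, hIH]
    constructor
    · rintro ⟨h11, hrest⟩ m hm ⟨⟨n, hn⟩, ⟨n', hn'⟩⟩
      rcases Nat.eq_zero_or_pos m with rfl | hmpos
      · have := keySeq_ge v s n; omega
      · obtain ⟨m', rfl⟩ : ∃ m', m = m' + 1 := ⟨m - 1, by omega⟩
        have hA := (key_shift v s hs m').mp ⟨n, hn⟩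
        have hB := (key_shift v s' hs' m').mp ⟨n', hn'⟩
        rw [← ha] at hA; rw [← hb] at hB
        rcases hA with ⟨rfl, hA1⟩ | ⟨nA, hnA⟩
        · rcases hB with ⟨-, hB1⟩ | ⟨nB, hnB⟩
          · exact h11 ⟨hA1, hB1⟩
          · have := keySeq_ge (fun i => v (i+1)) b nB; omega
        · rcases hB with ⟨rfl, hB1⟩ | ⟨nB, hnB⟩
          · have := keySeq_ge (fun i => v (i+1)) a nA; omega
          · exact hrest m' (by omega) ⟨⟨nA, hnA⟩, ⟨nB, hnB⟩⟩
    · intro h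
      constructor
      · rintro ⟨rfl, rfl⟩
        exact h 1 (by omega) ⟨⟨0, rfl⟩, ⟨0, rfl⟩⟩
      · intro m hm ⟨⟨nA, hnA⟩, ⟨nB, hnB⟩⟩
        refine h (m+1) (by omega) ⟨?_, ?_⟩
        · exact (key_shift v s hs m).mpr (Or.inr ⟨nA, by rw [← ha]; exact hnA⟩)
        · exact (key_shift v s' hs' m).mpr (Or.inr ⟨nB, by rw [← hb]; exact hnB⟩)

/-! ### Weights -/

open ENNReal

noncomputable def W (p : ℝ) : ℕ → ℝ≥0∞
  | 0 => 0
  | k+1 => ENNReal.ofReal ((1-p) * p^k)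

lemma W_zero (p : ℝ) : W p 0 = 0 := rfl

lemma W_one (p : ℝ) : W p 1 = ENNReal.ofReal (1-p) := by
  show ENNReal.ofReal ((1-p) * p^0) = _
  norm_num

lemma W_succ_succ (p : ℝ) (hp : 0 ≤ p) (k : ℕ) :
    W p (k+2) = ENNReal.ofReal p * W p (k+1) := by
  show ENNReal.ofReal ((1-p) * p^(k+1)) = ENNReal.ofReal p * ENNReal.ofReal ((1-p) * p^k)
  rw [← ENNReal.ofReal_mul hp]
  ring_nf

lemma ofReal_one_sub (p : ℝ) (hp : 0 ≤ p) :
    ENNReal.ofReal (1-p) = 1 - ENNReal.ofReal p := by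
  rw [← ENNReal.ofReal_one, ← ENNReal.ofReal_sub _ hp]

lemma tsum_geo (p : ℝ) (hp : 0 ≤ p) (hp1 : p < 1) :
    ∑' k : ℕ, ENNReal.ofReal ((1-p) * p^k) = 1 := by
  have h1 : ∀ k : ℕ, ENNReal.ofReal ((1-p) * p^k)
      = ENNReal.ofReal (1-p) * (ENNReal.ofReal p)^k := by
    intro k
    rw [← ENNReal.ofReal_pow hp, ← ENNReal.ofReal_mul (by linarith)]
  simp only [h1]
  rw [ENNReal.tsum_mul_left, ENNReal.tsum_geometric, ofReal_one_sub p hp]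
  refine ENNReal.mul_inv_cancel ?_ ?_
  · rw [ne_eq, tsub_eq_zero_iff_le, not_le]
    exact ENNReal.ofReal_lt_one.mpr hp1
  · exact ne_top_of_le_ne_top one_ne_top tsub_le_self

lemma tsum_W (p : ℝ) (hp : 0 ≤ p) (hp1 : p < 1) : ∑' k, W p k = 1 := by
  rw [tsum_eq_zero_add' ENNReal.summable, W_zero, zero_add]
  exact tsum_geo p hp hp1

lemma tsum_shift (f : ℕ → ℝ≥0∞) (h0 : f 0 = 0) : ∑' n, f n = ∑' n, f (n+1) := by
  rw [tsum_eq_zero_add' ENNReal.summable, h0, zero_add]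

lemma tsum_split2 (f : ℕ → ℝ≥0∞) : ∑' n, f n = f 0 + (f 1 + ∑' n, f (n+2)) := by
  rw [tsum_eq_zero_add' ENNReal.summable]
  congr 1
  rw [tsum_eq_zero_add' ENNReal.summable]

/-- The survival weight: total weight of decks for which the two players with fronts
`a`, `b` have no common key among the next `N` positions. -/
noncomputable def H (p : ℝ) : ℕ → ℕ → ℕ → ℝ≥0∞
  | 0, _, _ => 1
  | N+1, a, b => if a = 1 ∧ b = 1 then 0 else
      ∑' k, W p k * H p N (if a = 1 then k else a - 1) (if b = 1 then k else b - 1)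

lemma H_one_one (p : ℝ) (N : ℕ) : H p (N+1) 1 1 = 0 := by
  simp [H]

lemma H_ss (p : ℝ) (hp : 0 ≤ p) (hp1 : p < 1) (N a b : ℕ) :
    H p (N+1) (a+2) (b+2) = H p N (a+1) (b+1) := by
  show (if _ ∧ _ then _ else _) = _
  rw [if_neg (by omega)]
  have h1 : ∀ k : ℕ, (if a+2 = 1 then k else a+2-1) = a+1 := fun k => by
    split <;> omega
  have h2 : ∀ k : ℕ, (if b+2 = 1 then k else b+2-1) = b+1 := fun k => by
    split <;> omega
  simp only [h1, h2]
  rw [ENNReal.tsum_mul_right, tsum_W p hp hp1, one_mul]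

lemma H_one_s (p : ℝ) (N b : ℕ) :
    H p (N+1) 1 (b+2) = ∑' k, W p k * H p N k (b+1) := by
  show (if _ ∧ _ then _ else _) = _
  rw [if_neg (by omega)]
  exact tsum_congr fun k => by rw [if_pos rfl, if_neg (by omega)]; norm_num

lemma H_s_one (p : ℝ) (N a : ℕ) :
    H p (N+1) (a+2) 1 = ∑' k, W p k * H p N (a+1) k := by
  show (if _ ∧ _ then _ else _) = _
  rw [if_neg (by omega)]
  exact tsum_congr fun k => by rw [if_pos rfl, if_neg (by omega)]; norm_num

/-! ### The double-sum identity -/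

noncomputable def TT (p : ℝ) (N : ℕ) : ℝ≥0∞ :=
  ∑' a, ∑' b, W p a * W p b * H p N a b

lemma TT_shift (p : ℝ) (N : ℕ) :
    TT p N = ∑' a, ∑' b, W p (a+1) * W p (b+1) * H p N (a+1) (b+1) := by
  rw [TT, tsum_shift _ (by simp [W_zero])]
  exact tsum_congr fun a => tsum_shift _ (by simp [W_zero])

lemma TT_succ (p : ℝ) (hp : 0 ≤ p) (hp1 : p < 1) (N : ℕ) :
    TT p (N+1) = (W p 1 * ENNReal.ofReal p +
      (ENNReal.ofReal p * W p 1 + ENNReal.ofReal p * ENNReal.ofReal p)) * TT p N := by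
  have hg1 : ∑' b, W p 1 * W p b * H p (N+1) 1 b = (W p 1 * ENNReal.ofReal p) * TT p N := by
    rw [tsum_split2]
    simp only [W_zero, mul_zero, zero_mul, H_one_one, zero_add]
    have e1 : ∀ b, W p 1 * W p (b+2) * H p (N+1) 1 (b+2)
        = (W p 1 * ENNReal.ofReal p) *
          (W p (b+1) * ∑' k, W p (k+1) * H p N (k+1) (b+1)) := by
      intro b
      rw [H_one_s, W_succ_succ p hp, ← tsum_shift (fun k => W p k * H p N k (b+1))
        (by simp [W_zero])]
      ring
    simp only [e1]
    rw [ENNReal.tsum_mul_left]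
    congr 1
    rw [TT_shift]
    simp only [← ENNReal.tsum_mul_left]
    rw [ENNReal.tsum_comm]
    exact tsum_congr fun a => tsum_congr fun b => by ring
  have hg2 : ∑' a, W p (a+2) * W p 1 * H p (N+1) (a+2) 1
      = (ENNReal.ofReal p * W p 1) * TT p N := by
    have e2 : ∀ a, W p (a+2) * W p 1 * H p (N+1) (a+2) 1
        = (ENNReal.ofReal p * W p 1) *
          (W p (a+1) * ∑' k, W p (k+1) * H p N (a+1) (k+1)) := by
      intro a
      rw [H_s_one, W_succ_succ p hp, ← tsum_shift (fun k => W p k * H p N (a+1) k)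
        (by simp [W_zero])]
      ring
    simp only [e2]
    rw [ENNReal.tsum_mul_left]
    congr 1
    rw [TT_shift]
    simp only [← ENNReal.tsum_mul_left]
    exact tsum_congr fun a => tsum_congr fun b => by ring
  have hg3 : ∑' a, ∑' b, W p (a+2) * W p (b+2) * H p (N+1) (a+2) (b+2)
      = (ENNReal.ofReal p * ENNReal.ofReal p) * TT p N := by
    have e3 : ∀ a b, W p (a+2) * W p (b+2) * H p (N+1) (a+2) (b+2)
        = (ENNReal.ofReal p * ENNReal.ofReal p) *
          (W p (a+1) * (W p (b+1) * H p N (a+1) (b+1))) := by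
      intro a b
      rw [H_ss p hp hp1, W_succ_succ p hp, W_succ_succ p hp]
      ring
    simp only [e3]
    simp only [ENNReal.tsum_mul_left]
    congr 1
    rw [TT_shift]
    refine tsum_congr fun a => ?_
    rw [← ENNReal.tsum_mul_left]
    exact tsum_congr fun b => by ring
  have expand : TT p (N+1)
      = ∑' b, W p 1 * W p b * H p (N+1) 1 b
        + (∑' a, W p (a+2) * W p 1 * H p (N+1) (a+2) 1
           + ∑' a, ∑' b, W p (a+2) * W p (b+2) * H p (N+1) (a+2) (b+2)) := by
    rw [TT, tsum_split2]
    simp only [W_zero, zero_mul, mul_zero, tsum_zero, zero_add]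
    congr 1
    have inner : ∀ a, ∑' b, W p (a+2) * W p b * H p (N+1) (a+2) b
        = W p (a+2) * W p 1 * H p (N+1) (a+2) 1
          + ∑' b, W p (a+2) * W p (b+2) * H p (N+1) (a+2) (b+2) := by
      intro a
      rw [tsum_split2]
      simp only [W_zero, mul_zero, zero_mul, zero_add]
    simp only [inner]
    rw [ENNReal.tsum_add]
  rw [expand, hg1, hg2, hg3]
  ring

lemma TT_pow (p : ℝ) (hp : 0 ≤ p) (hp1 : p < 1) (N : ℕ) :
    TT p N = (ENNReal.ofReal (p * (2 - p)))^N := by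
  induction N with
  | zero =>
    show (∑' a, ∑' b, W p a * W p b * H p 0 a b) = 1
    have : ∀ a b : ℕ, W p a * W p b * H p 0 a b = W p a * W p b := fun a b => by
      show W p a * W p b * 1 = _; rw [mul_one]
    simp only [this, ENNReal.tsum_mul_left, ENNReal.tsum_mul_right,
      tsum_W p hp hp1, one_mul, pow_zero]
  | succ N ih =>
    rw [TT_succ p hp hp1, ih, pow_succ, mul_comm ((ENNReal.ofReal (p * (2-p)))^N)]
    congr 1
    have h1p : (0:ℝ) ≤ 1 - p := by linarith
    rw [W_one, ← ENNReal.ofReal_mul h1p, ← ENNReal.ofReal_mul hp,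
      ← ENNReal.ofReal_mul hp,
      ← ENNReal.ofReal_add (mul_nonneg hp h1p) (mul_nonneg hp hp),
      ← ENNReal.ofReal_add (mul_nonneg h1p hp)
        (add_nonneg (mul_nonneg hp h1p) (mul_nonneg hp hp))]
    congr 1
    ring

/-! ### Summing out the deck -/

def extd (N : ℕ) (d : Fin N → ℕ) : ℕ → ℕ := fun i => if h : i < N then d ⟨i, h⟩ else 0

lemma extd_cons_zero (N k : ℕ) (d : Fin N → ℕ) : extd (N+1) (Fin.cons k d) 0 = k := by
  simp [extd]

lemma extd_cons_succ (N k : ℕ) (d : Fin N → ℕ) :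
    (fun i => extd (N+1) (Fin.cons k d) (i+1)) = extd N d := by
  funext i
  by_cases h : i < N
  · have h' : i + 1 < N + 1 := by omega
    show extd (N+1) (Fin.cons k d) (i+1) = _
    rw [extd, extd, dif_pos h', dif_pos h]
    exact Fin.cons_succ (α := fun _ : Fin (N+1) => ℕ) k d ⟨i, h⟩
  · show extd (N+1) (Fin.cons k d) (i+1) = _
    rw [extd, extd, dif_neg (by omega), dif_neg h]

lemma D1 (p : ℝ) : ∀ (N s s' : ℕ),
    (∑' d : Fin N → ℕ, if gd N s s' (extd N d) then ∏ j, W p (d j) else 0)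
      = H p N s s'
  | 0, s, s' => by
    rw [tsum_eq_single (default : Fin 0 → ℕ)
      (fun b hb => absurd (Subsingleton.elim b default) hb)]
    rw [if_pos (show gd 0 s s' (extd 0 default) = true from rfl)]
    show (1 : ℝ≥0∞) = H p 0 s s'
    rfl
  | N+1, s, s' => by
    rw [← (Fin.consEquiv (fun _ : Fin (N+1) => ℕ)).tsum_eq, ENNReal.tsum_prod']
    have step1 : ∀ (x : ℕ × (Fin N → ℕ)), (Fin.consEquiv (fun _ : Fin (N+1) => ℕ)) x
        = Fin.cons x.1 x.2 := fun _ => rfl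
    simp only [step1]
    by_cases hss : s = 1 ∧ s' = 1
    · have hz : ∀ (k : ℕ) (d : Fin N → ℕ),
          (if gd (N+1) s s' (extd (N+1) (Fin.cons k d)) then
            ∏ j, W p (Fin.cons (α := fun _ => ℕ) k d j) else 0) = 0 := by
        intro k d
        rw [if_neg]
        intro hgd
        exact ((gd_succ _ _ _ _).mp hgd).1 hss
      simp only [hz, tsum_zero]
      show (0:ℝ≥0∞) = if s = 1 ∧ s' = 1 then 0 else _
      rw [if_pos hss]
    · have key : ∀ (k : ℕ) (d : Fin N → ℕ),
          (gd (N+1) s s' (extd (N+1) (Fin.cons k d)) = true) ↔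
          (gd N (if s = 1 then k else s - 1) (if s' = 1 then k else s' - 1)
            (extd N d) = true) := by
        intro k d
        rw [gd_succ, extd_cons_succ]
        show (¬(s = 1 ∧ s' = 1) ∧ gd N (if s = 1 then extd (N+1) (Fin.cons k d) 0 else s - 1)
          (if s' = 1 then extd (N+1) (Fin.cons k d) 0 else s' - 1) (extd N d) = true) ↔ _
        rw [extd_cons_zero]
        simp [hss]
      have summand : ∀ (k : ℕ) (d : Fin N → ℕ),
          (if gd (N+1) s s' (extd (N+1) (Fin.cons k d)) then
            ∏ j, W p (Fin.cons (α := fun _ => ℕ) k d j) else 0)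
          = W p k * (if gd N (if s = 1 then k else s - 1) (if s' = 1 then k else s' - 1)
              (extd N d) then ∏ j, W p (d j) else 0) := by
        intro k d
        have hprod : (∏ j : Fin (N+1), W p (Fin.cons (α := fun _ => ℕ) k d j))
            = W p k * ∏ j, W p (d j) := by
          rw [Fin.prod_univ_succ]
          simp
        rw [if_congr (key k d) hprod rfl]
        by_cases hgd : gd N (if s = 1 then k else s - 1) (if s' = 1 then k else s' - 1)
            (extd N d) = true
        · rw [if_pos hgd, if_pos hgd]
        · rw [if_neg hgd, if_neg hgd, mul_zero]
      simp only [summand]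
      simp only [ENNReal.tsum_mul_left]
      have hrec : ∀ k, (∑' d : Fin N → ℕ, if gd N (if s = 1 then k else s - 1)
          (if s' = 1 then k else s' - 1) (extd N d) then ∏ j, W p (d j) else 0)
          = H p N (if s = 1 then k else s - 1) (if s' = 1 then k else s' - 1) :=
        fun k => D1 p N _ _
      simp only [hrec]
      show _ = if s = 1 ∧ s' = 1 then 0 else _
      rw [if_neg hss]

/-! ### Measure-theoretic helpers -/

lemma geom_law {Ω : Type*} [MeasureSpace Ω] [IsProbabilityMeasure (ℙ : Measure Ω)]
    (p : ℝ) (hp : 0 ≤ p) (hp1 : p < 1) (X : Ω → ℕ) (hX : Measurable X)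
    (h : ∀ k, 1 ≤ k → ℙ {ω | X ω = k} = ENNReal.ofReal ((1-p) * p^(k-1))) :
    ∀ k, ℙ {ω | X ω = k} = W p k := by
  have hmeas : ∀ k : ℕ, MeasurableSet {ω | X ω = k} := fun k =>
    hX (measurableSet_singleton k)
  have hsucc : ∀ k : ℕ, ℙ {ω | X ω = k+1} = ENNReal.ofReal ((1-p) * p^k) := by
    intro k
    rw [h (k+1) (by omega)]; norm_num
  have hA : ℙ (⋃ k : ℕ, {ω | X ω = k+1}) = 1 := by
    rw [measure_iUnion ?_ (fun k => hmeas (k+1))]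
    · simp only [hsucc]
      exact tsum_geo p hp hp1
    · intro i j hij
      refine Set.disjoint_left.mpr fun ω h1 h2 => hij ?_
      simp only [Set.mem_setOf_eq] at h1 h2
      omega
  have hcompl : ℙ (⋃ k : ℕ, {ω | X ω = k+1})ᶜ = 0 := by
    rw [measure_compl (MeasurableSet.iUnion fun k => hmeas (k+1)) (measure_ne_top _ _), hA,
      measure_univ, tsub_self]
  have h0 : ℙ {ω | X ω = 0} = 0 := by
    refine measure_mono_null ?_ hcompl
    intro ω hω
    simp only [Set.mem_setOf_eq] at hω
    simp only [Set.mem_compl_iff, Set.mem_iUnion, Set.mem_setOf_eq, not_exists]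
    omega
  intro k
  match k with
  | 0 => exact h0
  | k+1 => exact hsucc k

lemma prod_formula {Ω : Type*} [MeasureSpace Ω] [IsProbabilityMeasure (ℙ : Measure Ω)]
    (p : ℝ) (deck : ℕ → Ω → ℕ) (S : Bool → Ω → ℕ)
    (hIndep : iIndepFun (Sum.elim deck S) ℙ)
    (hlawS : ∀ b k, ℙ {ω | S b ω = k} = W p k)
    (hlawD : ∀ m k, 1 ≤ m → ℙ {ω | deck m ω = k} = W p k)
    (N : ℕ) (x : ℕ × ℕ × (Fin N → ℕ)) :
    ℙ ((fun ω => (S true ω, S false ω, fun j : Fin N => deck (j.1+1) ω)) ⁻¹' {x})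
      = W p x.1 * (W p x.2.1 * ∏ j, W p (x.2.2 j)) := by
  classical
  obtain ⟨s, s', d⟩ := x
  set T1 : Finset (ℕ ⊕ Bool) := Finset.univ.image fun j : Fin N => (Sum.inl (j.1+1) : ℕ ⊕ Bool)
    with hT1
  set T2 : Finset (ℕ ⊕ Bool) := {Sum.inr true, Sum.inr false} with hT2
  set sets : ℕ ⊕ Bool → Set ℕ :=
    Sum.elim (fun m => {extd N d (m-1)}) (fun b => {if b then s else s'}) with hsets
  have hmeas : ∀ i ∈ T1 ∪ T2, MeasurableSet (sets i) := by
    intro i _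
    rcases i with m | b
    · exact measurableSet_singleton _
    · exact measurableSet_singleton _
  have key := hIndep.measure_inter_preimage_eq_mul (T1 ∪ T2) hmeas
  have hset : (⋂ i ∈ T1 ∪ T2, Sum.elim deck S i ⁻¹' sets i)
      = ((fun ω => (S true ω, S false ω, fun j : Fin N => deck (j.1+1) ω)) ⁻¹'
          {(s, s', d)}) := by
    ext ω
    simp only [Set.mem_iInter, Finset.mem_union, hT1, hT2, Finset.mem_image,
      Finset.mem_univ, true_and, Finset.mem_insert, Finset.mem_singleton,
      Set.mem_preimage, Set.mem_singleton_iff, Prod.mk.injEq]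
    constructor
    · intro hI
      have h1 : S true ω = s := by
        have := hI (Sum.inr true) (Or.inr (Or.inl rfl))
        simpa [hsets] using this
      have h2 : S false ω = s' := by
        have := hI (Sum.inr false) (Or.inr (Or.inr rfl))
        simpa [hsets] using this
      have h3 : ∀ j : Fin N, deck (j.1+1) ω = d j := by
        intro j
        have := hI (Sum.inl (j.1+1)) (Or.inl ⟨j, rfl⟩)
        simp only [hsets, Sum.elim_inl, Set.mem_singleton_iff, Nat.add_sub_cancel] at this
        rw [this, extd, dif_pos j.2]
      exact ⟨h1, h2, funext h3⟩
    · rintro ⟨h1, h2, h3⟩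
      intro i hi
      rcases hi with ⟨j, rfl⟩ | hi2
      · simp only [hsets, Sum.elim_inl, Set.mem_preimage, Set.mem_singleton_iff,
          Nat.add_sub_cancel]
        show deck (j.1+1) ω = extd N d j.1
        rw [extd, dif_pos j.2]
        have := congrFun h3 j
        simpa using this
      · rcases hi2 with rfl | rfl
        · simpa [hsets] using h1
        · simpa [hsets] using h2
  rw [← hset, key]
  have hdisj : Disjoint T1 T2 := by
    rw [Finset.disjoint_left]
    intro i hi1 hi2
    simp only [hT1, Finset.mem_image, Finset.mem_univ, true_and] at hi1
    obtain ⟨j, rfl⟩ := hi1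
    simp [hT2] at hi2
  rw [Finset.prod_union hdisj]
  have hprod1 : ∏ i ∈ T1, ℙ (Sum.elim deck S i ⁻¹' sets i) = ∏ j : Fin N, W p (d j) := by
    rw [hT1, Finset.prod_image]
    · refine Finset.prod_congr rfl fun j _ => ?_
      have hext : extd N d (j.1+1-1) = d j := by
        simp only [Nat.add_sub_cancel]
        rw [extd, dif_pos j.2]
      show ℙ (deck (j.1+1) ⁻¹' {extd N d (j.1+1-1)}) = W p (d j)
      rw [hext]
      exact hlawD (j.1+1) (d j) (by omega)
    · intro a _ b _ hab
      have : a.1 + 1 = b.1 + 1 := Sum.inl.inj hab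
      exact Fin.ext (by omega)
  have hprod2 : ∏ i ∈ T2, ℙ (Sum.elim deck S i ⁻¹' sets i) = W p s * W p s' := by
    rw [hT2, Finset.prod_insert (by simp), Finset.prod_singleton]
    have e1 : ℙ (Sum.elim deck S (Sum.inr true) ⁻¹' sets (Sum.inr true)) = W p s := by
      show ℙ (S true ⁻¹' {if true then s else s'}) = W p s
      exact hlawS true s
    have e2 : ℙ (Sum.elim deck S (Sum.inr false) ⁻¹' sets (Sum.inr false)) = W p s' := by
      show ℙ (S false ⁻¹' {if false then s else s'}) = W p s'
      exact hlawS false s'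
    rw [e1, e2]
  rw [hprod1, hprod2]
  ring

end KruskalAux

open KruskalAux ENNReal in
/-- Geometric Kruskal count model: the deck labels `deck m`, `m = 1, 2, …`, and the two
players' secret numbers `S true`, `S false` are jointly independent, each distributed
geometrically on `ℕ⁺` with `Prob[· = k] = (1-p) p^(k-1)`.  If `t` is the first position
that is a key position for both players, then `Prob[t > N] = p^N (2-p)^N` for all
`N ≥ 1`; here the event `{t > N}` is the event that no position `m ≤ N` is a key
position of both players. -/
theorem geometric_kruskal_coupling {Ω : Type*} [MeasureSpace Ω]
    [IsProbabilityMeasure (ℙ : Measure Ω)] (p : ℝ) (hp : 0 < p) (hp1 : p < 1)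
    (deck : ℕ → Ω → ℕ) (S : Bool → Ω → ℕ)
    (hdeckMeas : ∀ m, Measurable (deck m)) (hSMeas : ∀ b, Measurable (S b))
    (hIndep : iIndepFun (Sum.elim deck S) ℙ)
    (hdeck : ∀ m k : ℕ, 1 ≤ m → 1 ≤ k →
      ℙ {ω | deck m ω = k} = ENNReal.ofReal ((1 - p) * p ^ (k - 1)))
    (hS : ∀ b, ∀ k : ℕ, 1 ≤ k →
      ℙ {ω | S b ω = k} = ENNReal.ofReal ((1 - p) * p ^ (k - 1)))
    (N : ℕ) (hN : 1 ≤ N) :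
    ℙ {ω | ∀ m ≤ N, ¬((∃ n, keySeq (fun i => deck i ω) (S true ω) n = m) ∧
        (∃ n, keySeq (fun i => deck i ω) (S false ω) n = m))}
      = ENNReal.ofReal (p ^ N * (2 - p) ^ N) := by
  classical
  have hp0 : (0:ℝ) ≤ p := hp.le
  have hlawS : ∀ b k, ℙ {ω | S b ω = k} = W p k := fun b =>
    geom_law p hp0 hp1 (S b) (hSMeas b) (hS b)
  have hlawD : ∀ m k, 1 ≤ m → ℙ {ω | deck m ω = k} = W p k := fun m k hm =>
    geom_law p hp0 hp1 (deck m) (hdeckMeas m) (fun k' hk' => hdeck m k' hm hk') k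
  set V : Ω → ℕ × ℕ × (Fin N → ℕ) :=
    fun ω => (S true ω, S false ω, fun j : Fin N => deck (j.1+1) ω) with hV
  set Goodx : ℕ × ℕ × (Fin N → ℕ) → Prop := fun x =>
    (gd N x.1 x.2.1 (extd N x.2.2) = true) ∧ 1 ≤ x.1 ∧ 1 ≤ x.2.1 ∧ ∀ j, 1 ≤ x.2.2 j
    with hGoodx
  have hVmeas : Measurable V :=
    (hSMeas true).prodMk ((hSMeas false).prodMk
      (measurable_pi_lambda _ fun j => hdeckMeas (j.1+1)))
  set Bad : Set Ω := ({ω | S true ω = 0} ∪ {ω | S false ω = 0})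
      ∪ ⋃ j : Fin N, {ω | deck (j.1+1) ω = 0} with hBadDef
  have hBad : ℙ Bad = 0 := by
    refine measure_union_null (measure_union_null ?_ ?_) (measure_iUnion_null fun j => ?_)
    · rw [hlawS true 0]; rfl
    · rw [hlawS false 0]; rfl
    · rw [hlawD (j.1+1) 0 (by omega)]; rfl
  have hmem : ∀ ω, ω ∉ Bad →
      ((∀ m ≤ N, ¬((∃ n, keySeq (fun i => deck i ω) (S true ω) n = m) ∧
        (∃ n, keySeq (fun i => deck i ω) (S false ω) n = m))) ↔ Goodx (V ω)) := by
    intro ω hω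
    simp only [hBadDef, Set.mem_union, Set.mem_iUnion, Set.mem_setOf_eq, not_or,
      not_exists] at hω
    obtain ⟨⟨hs0, hs0'⟩, hd0⟩ := hω
    have hs : 1 ≤ S true ω := by omega
    have hs' : 1 ≤ S false ω := by omega
    have hdk : ∀ j : Fin N, 1 ≤ deck (j.1+1) ω := fun j => by
      have := hd0 j; omega
    have hv : ∀ i, 1 ≤ i → i ≤ N → 1 ≤ deck i ω := by
      intro i h1 h2
      have := hdk ⟨i-1, by omega⟩
      simp only at this
      have he : i - 1 + 1 = i := by omega
      rwa [he] at this
    have hgdeq : gd N (S true ω) (S false ω) (extd N (fun j : Fin N => deck (j.1+1) ω))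
        = gd N (S true ω) (S false ω) (fun i => deck (i+1) ω) := by
      refine gd_congr N _ _ _ _ fun i hi => ?_
      rw [extd, dif_pos hi]
    have hiff := gd_iff N (fun i => deck i ω) (S true ω) (S false ω) hs hs' hv
    constructor
    · intro h
      refine ⟨?_, hs, hs', hdk⟩
      show gd N (S true ω) (S false ω) (extd N (fun j : Fin N => deck (j.1+1) ω)) = true
      rw [hgdeq]
      exact hiff.mpr h
    · rintro ⟨hgd, -, -, -⟩
      refine hiff.mp ?_
      rw [← hgdeq]
      exact hgd
  have hae : {ω | ∀ m ≤ N, ¬((∃ n, keySeq (fun i => deck i ω) (S true ω) n = m) ∧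
        (∃ n, keySeq (fun i => deck i ω) (S false ω) n = m))}
      =ᵐ[ℙ] (V ⁻¹' {x | Goodx x}) := by
    rw [Filter.eventuallyEq_set]
    have hnB : ∀ᵐ ω ∂(ℙ : Measure Ω), ω ∉ Bad := by
      rw [MeasureTheory.ae_iff]
      simpa only [not_not, Set.setOf_mem_eq] using hBad
    filter_upwards [hnB] with ω hω
    exact hmem ω hω
  rw [measure_congr hae]
  set C : (ℕ × ℕ × (Fin N → ℕ)) → Set Ω :=
    fun x => if Goodx x then V ⁻¹' {x} else ∅ with hC
  have hCsub : ∀ x, C x ⊆ V ⁻¹' {x} := by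
    intro x
    simp only [hC]
    split
    · exact subset_rfl
    · exact Set.empty_subset _
  have hUnion : (V ⁻¹' {x | Goodx x}) = ⋃ x, C x := by
    ext ω
    simp only [Set.mem_preimage, Set.mem_setOf_eq, Set.mem_iUnion]
    constructor
    · intro h
      exact ⟨V ω, by simp only [hC, if_pos h]; exact rfl⟩
    · rintro ⟨x, hx⟩
      by_cases h : Goodx x
      · simp only [hC] at hx
        simp only [if_pos h, Set.mem_preimage, Set.mem_singleton_iff] at hx
        rw [hx]
        exact h
      · simp only [hC] at hx
        simp only [if_neg h] at hx
        exact absurd hx (Set.notMem_empty ω)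
  rw [hUnion, measure_iUnion ?_ ?_]
  rotate_left
  · intro x y hxy
    refine Disjoint.mono (hCsub x) (hCsub y) (Set.disjoint_left.mpr ?_)
    intro ω h1 h2
    simp only [Set.mem_preimage, Set.mem_singleton_iff] at h1 h2
    exact hxy (h1 ▸ h2 ▸ rfl)
  · intro x
    simp only [hC]
    split
    · exact hVmeas (measurableSet_singleton x)
    · exact MeasurableSet.empty
  have hCval : ∀ x, ℙ (C x) = if Goodx x then ℙ (V ⁻¹' {x}) else 0 := by
    intro x
    simp only [hC]
    split
    · rfl
    · exact measure_empty
  simp only [hCval]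
  have hprodx := prod_formula p deck S hIndep hlawS hlawD N
  have hptwise : ∀ x : ℕ × ℕ × (Fin N → ℕ),
      (if Goodx x then ℙ (V ⁻¹' {x}) else 0)
      = W p x.1 * (W p x.2.1 *
          (if gd N x.1 x.2.1 (extd N x.2.2) then ∏ j, W p (x.2.2 j) else 0)) := by
    intro x
    by_cases hg : Goodx x
    · rw [if_pos hg, hV, hprodx x, if_pos hg.1]
    · rw [if_neg hg]
      by_cases hgd : gd N x.1 x.2.1 (extd N x.2.2) = true
      · have hzero : x.1 = 0 ∨ x.2.1 = 0 ∨ ∃ j, x.2.2 j = 0 := by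
          by_contra hcon
          push_neg at hcon
          obtain ⟨h1, h2, h3⟩ := hcon
          exact hg ⟨hgd, by omega, by omega, fun j => by have := h3 j; omega⟩
        rcases hzero with h | h | ⟨j, hj⟩
        · rw [h, W_zero, zero_mul]
        · rw [h, W_zero, zero_mul, mul_zero]
        · rw [if_pos hgd, Finset.prod_eq_zero (Finset.mem_univ j) (by rw [hj]; rfl),
            mul_zero, mul_zero]
      · rw [if_neg hgd, mul_zero, mul_zero]
  simp only [hptwise]
  rw [ENNReal.tsum_prod']
  have hinner : ∀ a : ℕ, (∑' (y : ℕ × (Fin N → ℕ)), W p a * (W p y.1 *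
      (if gd N a y.1 (extd N y.2) then ∏ j, W p (y.2 j) else 0)))
      = W p a * ∑' b, W p b * H p N a b := by
    intro a
    rw [ENNReal.tsum_prod']
    dsimp only
    simp only [ENNReal.tsum_mul_left]
    congr 1
    refine tsum_congr fun b => ?_
    congr 1
    exact D1 p N a b
  calc (∑' (a : ℕ) (y : ℕ × (Fin N → ℕ)), W p a * (W p y.1 *
      (if gd N a y.1 (extd N y.2) then ∏ j, W p (y.2 j) else 0)))
      = ∑' a, W p a * ∑' b, W p b * H p N a b := tsum_congr hinner
    _ = TT p N := by
        rw [TT]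
        refine tsum_congr fun a => ?_
        rw [← ENNReal.tsum_mul_left]
        exact tsum_congr fun b => by ring
    _ = (ENNReal.ofReal (p * (2 - p)))^N := TT_pow p hp0 hp1 N
    _ = ENNReal.ofReal (p ^ N * (2 - p) ^ N) := by
        rw [← ENNReal.ofReal_pow (by nlinarith), mul_pow]
end

section
/- For the leapfrog chain L_B on states {-(B-1), ..., B-1}, with transition probabilities p_{ij} = 1/B if i ≠ 0 and 1 ≤ sign(i)(i-j) ≤ B (else 0), and p_{0j} = (B-|j|)/B² for |j| ≤ B-1, the distribution π_j = (B-|j|)/B² is stationary: ∑_j π_j = 1 and ∑_i π_i p_{ij} = π_j for all j. -/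
private lemma sum_Icc_id_cast (a b : ℤ) (h : a ≤ b + 1) :
    ∑ i ∈ Finset.Icc a b, (i : ℝ) = ((a : ℝ) + b) * ((b : ℝ) + 1 - a) / 2 := by
  have key : ∀ n : ℕ, ∑ i ∈ Finset.Icc a (a - 1 + n), (i : ℝ)
      = (2 * (a : ℝ) - 1 + n) * n / 2 := by
    intro n
    induction n with
    | zero => simp [Finset.Icc_eq_empty (by omega : ¬ a ≤ a - 1 + (0:ℕ))]
    | succ n ih =>
      have hnot : a - 1 + ((n : ℤ) + 1) ∉ Finset.Icc a (a - 1 + n) := by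
        simp only [Finset.mem_Icc]; omega
      have hins : Finset.Icc a (a - 1 + ((n : ℕ) + 1 : ℕ))
          = insert (a - 1 + ((n : ℤ) + 1)) (Finset.Icc a (a - 1 + n)) := by
        ext i; simp only [Finset.mem_Icc, Finset.mem_insert]; push_cast; omega
      rw [hins, Finset.sum_insert hnot, ih]
      push_cast; ring
  have hn : b = a - 1 + ((b + 1 - a).toNat : ℤ) := by
    have := Int.toNat_of_nonneg (by omega : 0 ≤ b + 1 - a); omega
  rw [hn, key ((b + 1 - a).toNat)]
  push_cast; ring

private lemma card_Icc_real (a b : ℤ) (h : a ≤ b + 1) :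
    ((Finset.Icc a b).card : ℝ) = (b : ℝ) + 1 - a := by
  have h2 : ((b + 1 - a).toNat : ℤ) = b + 1 - a := Int.toNat_of_nonneg (by omega)
  rw [Int.card_Icc]
  have h3 : ((b + 1 - a).toNat : ℝ) = ((b + 1 - a : ℤ) : ℝ) := by exact_mod_cast h2
  rw [h3]; push_cast; ring

private lemma sum_piece_pos (Bn : ℕ) (a b : ℤ) (ha : 0 ≤ a) (h : a ≤ b + 1) :
    ∑ i ∈ Finset.Icc a b, ((Bn : ℝ) - |(i : ℝ)|) / (Bn : ℝ) ^ 2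
      = (((b : ℝ) + 1 - a) * Bn - ((a : ℝ) + b) * ((b : ℝ) + 1 - a) / 2) / (Bn : ℝ) ^ 2 := by
  rw [← Finset.sum_div]
  congr 1
  have habs : ∀ i ∈ Finset.Icc a b, (Bn : ℝ) - |(i : ℝ)| = (Bn : ℝ) - (i : ℝ) := by
    intro i hi
    rw [Finset.mem_Icc] at hi
    rw [abs_of_nonneg (by exact_mod_cast (by omega : (0:ℤ) ≤ i))]
  rw [Finset.sum_congr rfl habs, Finset.sum_sub_distrib, Finset.sum_const,
    sum_Icc_id_cast a b h, nsmul_eq_mul, card_Icc_real a b h]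

private lemma sum_piece_neg (Bn : ℕ) (a b : ℤ) (hb : b ≤ 0) (h : a ≤ b + 1) :
    ∑ i ∈ Finset.Icc a b, ((Bn : ℝ) - |(i : ℝ)|) / (Bn : ℝ) ^ 2
      = (((b : ℝ) + 1 - a) * Bn + ((a : ℝ) + b) * ((b : ℝ) + 1 - a) / 2) / (Bn : ℝ) ^ 2 := by
  rw [← Finset.sum_div]
  congr 1
  have habs : ∀ i ∈ Finset.Icc a b, (Bn : ℝ) - |(i : ℝ)| = (Bn : ℝ) - (-(i : ℝ)) := by
    intro i hi
    rw [Finset.mem_Icc] at hi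
    rw [abs_of_nonpos (by exact_mod_cast (by omega : i ≤ (0:ℤ)))]
  rw [Finset.sum_congr rfl habs, Finset.sum_sub_distrib, Finset.sum_const,
    Finset.sum_neg_distrib, sum_Icc_id_cast a b h, nsmul_eq_mul, card_Icc_real a b h]
  ring

/-- The distribution `π_j = (B - |j|)/B²` on `{-(B-1), …, B-1}` is stationary for the
leapfrog chain `L_B`: from state `i ≠ 0` the chain moves to `j` with probability `1/B`
when `1 ≤ sign(i)·(i-j) ≤ B` (else `0`), and from state `0` it moves to `j` with
probability `(B - |j|)/B²`. -/
theorem leapfrog_stationary (B : ℕ) (hB : 2 ≤ B) :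
    let π : ℤ → ℝ := fun j => ((B : ℝ) - |(j : ℝ)|) / (B : ℝ) ^ 2
    let p : ℤ → ℤ → ℝ := fun i j =>
      if i ≠ 0 then
        (if 1 ≤ i.sign * (i - j) ∧ i.sign * (i - j) ≤ (B : ℤ) then 1 / (B : ℝ) else 0)
      else ((B : ℝ) - |(j : ℝ)|) / (B : ℝ) ^ 2
    (∑ j ∈ Finset.Icc (-(B : ℤ) + 1) ((B : ℤ) - 1), π j) = 1 ∧
      ∀ j ∈ Finset.Icc (-(B : ℤ) + 1) ((B : ℤ) - 1),
        (∑ i ∈ Finset.Icc (-(B : ℤ) + 1) ((B : ℤ) - 1), π i * p i j) = π j := by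
  intro π p
  have hBZ : (2 : ℤ) ≤ (B : ℤ) := by exact_mod_cast hB
  have hBR : (0 : ℝ) < (B : ℝ) := by exact_mod_cast (by omega : 0 < B)
  have hBne : (B : ℝ) ≠ 0 := ne_of_gt hBR
  constructor
  · show (∑ j ∈ Finset.Icc (-(B : ℤ) + 1) ((B : ℤ) - 1),
        ((B : ℝ) - |(j : ℝ)|) / (B : ℝ) ^ 2) = 1
    have hsplit : Finset.Icc (-(B : ℤ) + 1) ((B : ℤ) - 1)
        = Finset.Icc (-(B : ℤ) + 1) (-1) ∪ Finset.Icc 0 ((B : ℤ) - 1) := by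
      ext i; simp only [Finset.mem_Icc, Finset.mem_union]; omega
    have hdisj : Disjoint (Finset.Icc (-(B : ℤ) + 1) (-1)) (Finset.Icc 0 ((B : ℤ) - 1)) := by
      rw [Finset.disjoint_left]
      intro a ha hb
      simp only [Finset.mem_Icc] at ha hb; omega
    rw [hsplit, Finset.sum_union hdisj,
      sum_piece_neg B _ _ (by omega) (by omega),
      sum_piece_pos B _ _ le_rfl (by omega)]
    push_cast
    field_simp
    ring
  · intro j hj
    rw [Finset.mem_Icc] at hj
    show (∑ i ∈ Finset.Icc (-(B : ℤ) + 1) ((B : ℤ) - 1),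
        ((B : ℝ) - |(i : ℝ)|) / (B : ℝ) ^ 2 *
          (if i ≠ 0 then
            (if 1 ≤ i.sign * (i - j) ∧ i.sign * (i - j) ≤ (B : ℤ) then 1 / (B : ℝ) else 0)
          else ((B : ℝ) - |(j : ℝ)|) / (B : ℝ) ^ 2))
        = ((B : ℝ) - |(j : ℝ)|) / (B : ℝ) ^ 2
    have h0mem : (0 : ℤ) ∈ Finset.Icc (-(B : ℤ) + 1) ((B : ℤ) - 1) := by
      rw [Finset.mem_Icc]; omega
    have hiff : ∀ i : ℤ, i ≠ 0 →
        ((1 ≤ i.sign * (i - j) ∧ i.sign * (i - j) ≤ (B : ℤ)) ↔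
          ((1 ≤ i ∧ j + 1 ≤ i ∧ i ≤ j + B) ∨ (i ≤ -1 ∧ j - B ≤ i ∧ i ≤ j - 1))) := by
      intro i hi
      rcases hi.lt_or_gt with h | h
      · rw [Int.sign_eq_neg_one_of_neg h]; omega
      · rw [Int.sign_eq_one_of_pos h]; omega
    have hterm : ∀ i ∈ (Finset.Icc (-(B : ℤ) + 1) ((B : ℤ) - 1)).erase 0,
        ((B : ℝ) - |(i : ℝ)|) / (B : ℝ) ^ 2 *
          (if i ≠ 0 then
            (if 1 ≤ i.sign * (i - j) ∧ i.sign * (i - j) ≤ (B : ℤ) then 1 / (B : ℝ) else 0)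
          else ((B : ℝ) - |(j : ℝ)|) / (B : ℝ) ^ 2)
        = if (1 ≤ i ∧ j + 1 ≤ i ∧ i ≤ j + B) ∨ (i ≤ -1 ∧ j - B ≤ i ∧ i ≤ j - 1) then
            ((B : ℝ) - |(i : ℝ)|) / (B : ℝ) ^ 2 * (1 / (B : ℝ)) else 0 := by
      intro i hi
      have hi0 : i ≠ 0 := (Finset.mem_erase.mp hi).1
      rw [if_pos hi0, if_congr (hiff i hi0) rfl rfl, mul_ite, mul_zero]
    rw [← Finset.add_sum_erase _ _ h0mem, Finset.sum_congr rfl hterm,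
      ← Finset.sum_filter]
    rcases lt_trichotomy j 0 with hj0 | hj0 | hj0
    · -- j < 0
      have hset : ((Finset.Icc (-(B : ℤ) + 1) ((B : ℤ) - 1)).erase 0).filter
          (fun i => (1 ≤ i ∧ j + 1 ≤ i ∧ i ≤ j + B) ∨ (i ≤ -1 ∧ j - B ≤ i ∧ i ≤ j - 1))
          = Finset.Icc 1 (j + B) ∪ Finset.Icc (-(B : ℤ) + 1) (j - 1) := by
        ext i
        simp only [Finset.mem_filter, Finset.mem_erase, Finset.mem_Icc, Finset.mem_union]
        omega
      have hdisjS : Disjoint (Finset.Icc (1 : ℤ) (j + B))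
          (Finset.Icc (-(B : ℤ) + 1) (j - 1)) := by
        rw [Finset.disjoint_left]
        intro a ha hb
        simp only [Finset.mem_Icc] at ha hb; omega
      rw [hset, Finset.sum_union hdisjS, ← Finset.sum_mul, ← Finset.sum_mul,
        sum_piece_pos B _ _ (by omega) (by omega),
        sum_piece_neg B _ _ (by omega) (by omega),
        abs_of_nonpos (a := (j : ℝ)) (by exact_mod_cast (by omega : j ≤ (0:ℤ)))]
      norm_num
      field_simp
      ring
    · -- j = 0
      subst hj0
      have hset : ((Finset.Icc (-(B : ℤ) + 1) ((B : ℤ) - 1)).erase 0).filter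
          (fun i => (1 ≤ i ∧ (0:ℤ) + 1 ≤ i ∧ i ≤ 0 + B) ∨ (i ≤ -1 ∧ (0:ℤ) - B ≤ i ∧ i ≤ 0 - 1))
          = Finset.Icc 1 ((B : ℤ) - 1) ∪ Finset.Icc (-(B : ℤ) + 1) (-1) := by
        ext i
        simp only [Finset.mem_filter, Finset.mem_erase, Finset.mem_Icc, Finset.mem_union]
        omega
      have hdisjS : Disjoint (Finset.Icc (1 : ℤ) ((B : ℤ) - 1))
          (Finset.Icc (-(B : ℤ) + 1) (-1)) := by
        rw [Finset.disjoint_left]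
        intro a ha hb
        simp only [Finset.mem_Icc] at ha hb; omega
      rw [hset, Finset.sum_union hdisjS, ← Finset.sum_mul, ← Finset.sum_mul,
        sum_piece_pos B _ _ (by omega) (by omega),
        sum_piece_neg B _ _ (by omega) (by omega)]
      norm_num
      field_simp
      ring
    · -- 0 < j
      have hset : ((Finset.Icc (-(B : ℤ) + 1) ((B : ℤ) - 1)).erase 0).filter
          (fun i => (1 ≤ i ∧ j + 1 ≤ i ∧ i ≤ j + B) ∨ (i ≤ -1 ∧ j - B ≤ i ∧ i ≤ j - 1))
          = Finset.Icc (j + 1) ((B : ℤ) - 1) ∪ Finset.Icc (j - B) (-1) := by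
        ext i
        simp only [Finset.mem_filter, Finset.mem_erase, Finset.mem_Icc, Finset.mem_union]
        omega
      have hdisjS : Disjoint (Finset.Icc (j + 1) ((B : ℤ) - 1))
          (Finset.Icc (j - B) (-1)) := by
        rw [Finset.disjoint_left]
        intro a ha hb
        simp only [Finset.mem_Icc] at ha hb; omega
      rw [hset, Finset.sum_union hdisjS, ← Finset.sum_mul, ← Finset.sum_mul,
        sum_piece_pos B _ _ (by omega) (by omega),
        sum_piece_neg B _ _ (by omega) (by omega),
        abs_of_nonneg (a := (j : ℝ)) (by exact_mod_cast (by omega : (0:ℤ) ≤ j))]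
      norm_num
      field_simp
      ring
end

section
/- The distribution π̄_j = (1 - 1/B)^{-1} (B - |j|)/B² for 1 ≤ |j| ≤ B-1 is a probability distribution (sums to 1) and is stationary for the reduced leapfrog chain L̄_B, whose transition probabilities are P̄_{ij} = 1/(B-1) if 1 ≤ sign(i)(i-j) ≤ B and j ≠ 0, and 0 otherwise, for states i, j with 1 ≤ |i|,|j| ≤ B-1. -/
private lemma icc_insert_top (a : ℤ) (n : ℕ) :
    Finset.Icc a (a + n) = insert (a + n) (Finset.Icc a (a + n - 1)) := by
  ext x; simp only [Finset.mem_Icc, Finset.mem_insert]; omega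

private lemma sum_icc_linear (C s a : ℤ) : ∀ n : ℕ,
    2 * ∑ i ∈ Finset.Icc a (a + n - 1), (C + s * i) = n * (2*C + s*(2*a + n - 1))
  | 0 => by
      rw [Finset.Icc_eq_empty (by omega)]
      simp
  | (n+1) => by
      have h := sum_icc_linear C s a n
      have h2 : a + ((n:ℤ)+1) - 1 = a + n := by ring
      push_cast
      rw [h2, icc_insert_top, Finset.sum_insert (by simp only [Finset.mem_Icc]; omega)]
      push_cast at h
      ring_nf
      ring_nf at h
      linarith

private lemma sum_icc_gen (C s a b : ℤ) (hab : a ≤ b + 1) :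
    2 * ∑ i ∈ Finset.Icc a b, (C + s * i) = (b + 1 - a) * (2*C + s*(a + b)) := by
  have h := sum_icc_linear C s a (b + 1 - a).toNat
  have hn : ((b + 1 - a).toNat : ℤ) = b + 1 - a := by omega
  rw [hn] at h
  have h2 : a + (b + 1 - a) - 1 = b := by ring
  rw [h2] at h
  rw [h]; ring

private lemma key1 (B : ℕ) (hB : 2 ≤ B) :
    ∑ j ∈ (Finset.Icc (-(B:ℤ) + 1) ((B:ℤ) - 1)).erase 0, ((B:ℤ) - |j|) = B*(B-1) := by
  have hsplit : (Finset.Icc (-(B:ℤ) + 1) ((B:ℤ) - 1)).erase 0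
      = Finset.Icc (-(B:ℤ)+1) (-1) ∪ Finset.Icc 1 ((B:ℤ)-1) := by
    ext x; simp only [Finset.mem_erase, Finset.mem_Icc, Finset.mem_union]; omega
  have hdisj : Disjoint (Finset.Icc (-(B:ℤ)+1) (-1)) (Finset.Icc 1 ((B:ℤ)-1)) := by
    rw [Finset.disjoint_left]; intro x hx hx2
    simp only [Finset.mem_Icc] at hx hx2; omega
  rw [hsplit, Finset.sum_union hdisj]
  have e1 : ∑ j ∈ Finset.Icc (-(B:ℤ)+1) (-1), ((B:ℤ) - |j|)
      = ∑ j ∈ Finset.Icc (-(B:ℤ)+1) (-1), ((B:ℤ) + 1 * j) := by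
    apply Finset.sum_congr rfl; intro x hx; simp only [Finset.mem_Icc] at hx
    rw [abs_of_neg (by omega)]; ring
  have e2 : ∑ j ∈ Finset.Icc (1:ℤ) ((B:ℤ)-1), ((B:ℤ) - |j|)
      = ∑ j ∈ Finset.Icc (1:ℤ) ((B:ℤ)-1), ((B:ℤ) + (-1) * j) := by
    apply Finset.sum_congr rfl; intro x hx; simp only [Finset.mem_Icc] at hx
    rw [abs_of_pos (by omega)]; ring
  have g1 := sum_icc_gen (B:ℤ) 1 (-(B:ℤ)+1) (-1) (by omega)
  have g2 := sum_icc_gen (B:ℤ) (-1) 1 ((B:ℤ)-1) (by omega)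
  rw [e1, e2]
  nlinarith [g1, g2]

private lemma key2 (B : ℕ) (hB : 2 ≤ B) (j : ℤ) (hj0 : j ≠ 0)
    (hjl : -(B:ℤ)+1 ≤ j) (hjr : j ≤ (B:ℤ)-1) :
    ∑ i ∈ ((Finset.Icc (-(B:ℤ) + 1) ((B:ℤ) - 1)).erase 0).filter
      (fun i => 1 ≤ i.sign * (i - j) ∧ i.sign * (i - j) ≤ (B:ℤ) ∧ j ≠ 0),
      ((B:ℤ) - |i|) = ((B:ℤ)-1) * ((B:ℤ) - |j|) := by
  rcases lt_or_gt_of_ne hj0 with hj | hj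
  · -- j < 0 : filter = Icc 1 (B+j) ∪ Icc (-B+1) (j-1)
    have hsplit : ((Finset.Icc (-(B:ℤ) + 1) ((B:ℤ) - 1)).erase 0).filter
        (fun i => 1 ≤ i.sign * (i - j) ∧ i.sign * (i - j) ≤ (B:ℤ) ∧ j ≠ 0)
        = Finset.Icc (1:ℤ) ((B:ℤ)+j) ∪ Finset.Icc (-(B:ℤ)+1) (j-1) := by
      ext x
      simp only [Finset.mem_filter, Finset.mem_erase, Finset.mem_Icc, Finset.mem_union]
      rcases lt_trichotomy x 0 with hx | hx | hx
      · rw [Int.sign_eq_neg_one_iff_neg.mpr hx]; constructor <;> intro h <;> omega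
      · subst hx; simp only [Int.sign_zero, zero_mul]; omega
      · rw [Int.sign_eq_one_iff_pos.mpr hx]; constructor <;> intro h <;> omega
    have hdisj : Disjoint (Finset.Icc (1:ℤ) ((B:ℤ)+j)) (Finset.Icc (-(B:ℤ)+1) (j-1)) := by
      rw [Finset.disjoint_left]; intro x hx hx2
      simp only [Finset.mem_Icc] at hx hx2; omega
    rw [hsplit, Finset.sum_union hdisj]
    have e1 : ∑ i ∈ Finset.Icc (1:ℤ) ((B:ℤ)+j), ((B:ℤ) - |i|)
        = ∑ i ∈ Finset.Icc (1:ℤ) ((B:ℤ)+j), ((B:ℤ) + (-1) * i) := by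
      apply Finset.sum_congr rfl; intro x hx; simp only [Finset.mem_Icc] at hx
      rw [abs_of_pos (by omega)]; ring
    have e2 : ∑ i ∈ Finset.Icc (-(B:ℤ)+1) (j-1), ((B:ℤ) - |i|)
        = ∑ i ∈ Finset.Icc (-(B:ℤ)+1) (j-1), ((B:ℤ) + 1 * i) := by
      apply Finset.sum_congr rfl; intro x hx; simp only [Finset.mem_Icc] at hx
      rw [abs_of_neg (by omega)]; ring
    have g1 := sum_icc_gen (B:ℤ) (-1) 1 ((B:ℤ)+j) (by omega)
    have g2 := sum_icc_gen (B:ℤ) 1 (-(B:ℤ)+1) (j-1) (by omega)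
    rw [e1, e2, abs_of_neg hj]
    nlinarith [g1, g2]
  · -- j > 0 : filter = Icc (j+1) (B-1) ∪ Icc (j-B) (-1)
    have hsplit : ((Finset.Icc (-(B:ℤ) + 1) ((B:ℤ) - 1)).erase 0).filter
        (fun i => 1 ≤ i.sign * (i - j) ∧ i.sign * (i - j) ≤ (B:ℤ) ∧ j ≠ 0)
        = Finset.Icc (j+1) ((B:ℤ)-1) ∪ Finset.Icc (j-(B:ℤ)) (-1) := by
      ext x
      simp only [Finset.mem_filter, Finset.mem_erase, Finset.mem_Icc, Finset.mem_union]
      rcases lt_trichotomy x 0 with hx | hx | hx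
      · rw [Int.sign_eq_neg_one_iff_neg.mpr hx]; constructor <;> intro h <;> omega
      · subst hx; simp only [Int.sign_zero, zero_mul]; omega
      · rw [Int.sign_eq_one_iff_pos.mpr hx]; constructor <;> intro h <;> omega
    have hdisj : Disjoint (Finset.Icc (j+1) ((B:ℤ)-1)) (Finset.Icc (j-(B:ℤ)) (-1)) := by
      rw [Finset.disjoint_left]; intro x hx hx2
      simp only [Finset.mem_Icc] at hx hx2; omega
    rw [hsplit, Finset.sum_union hdisj]
    have e1 : ∑ i ∈ Finset.Icc (j+1) ((B:ℤ)-1), ((B:ℤ) - |i|)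
        = ∑ i ∈ Finset.Icc (j+1) ((B:ℤ)-1), ((B:ℤ) + (-1) * i) := by
      apply Finset.sum_congr rfl; intro x hx; simp only [Finset.mem_Icc] at hx
      rw [abs_of_pos (by omega)]; ring
    have e2 : ∑ i ∈ Finset.Icc (j-(B:ℤ)) (-1), ((B:ℤ) - |i|)
        = ∑ i ∈ Finset.Icc (j-(B:ℤ)) (-1), ((B:ℤ) + 1 * i) := by
      apply Finset.sum_congr rfl; intro x hx; simp only [Finset.mem_Icc] at hx
      rw [abs_of_neg (by omega)]; ring
    have g1 := sum_icc_gen (B:ℤ) (-1) (j+1) ((B:ℤ)-1) (by omega)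
    have g2 := sum_icc_gen (B:ℤ) 1 (j-(B:ℤ)) (-1) (by omega)
    rw [e1, e2, abs_of_pos hj]
    nlinarith [g1, g2]


/-- The distribution `π̄_j = (1 - 1/B)⁻¹ (B - |j|)/B²` on `{j : 1 ≤ |j| ≤ B-1}` sums to 1
and is stationary for the reduced leapfrog chain `L̄_B`, whose transition probabilities are
`P̄_{ij} = 1/(B-1)` if `1 ≤ sign(i)·(i-j) ≤ B` and `j ≠ 0`, and `0` otherwise. -/
theorem reduced_leapfrog_stationary (B : ℕ) (hB : 2 ≤ B) :
    let S : Finset ℤ := (Finset.Icc (-(B : ℤ) + 1) ((B : ℤ) - 1)).erase 0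
    let π : ℤ → ℝ := fun j => (1 - 1 / (B : ℝ))⁻¹ * (((B : ℝ) - |(j : ℝ)|) / (B : ℝ) ^ 2)
    let P : ℤ → ℤ → ℝ := fun i j =>
      if 1 ≤ i.sign * (i - j) ∧ i.sign * (i - j) ≤ (B : ℤ) ∧ j ≠ 0
        then 1 / ((B : ℝ) - 1) else 0
    (∑ j ∈ S, π j) = 1 ∧ ∀ j ∈ S, (∑ i ∈ S, π i * P i j) = π j := by
  intro S π P
  have hB0 : (B:ℝ) ≠ 0 := by positivity
  have hB1 : (B:ℝ) - 1 ≠ 0 := by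
    have : (2:ℝ) ≤ B := by exact_mod_cast hB
    linarith
  have hcast : ∀ i : ℤ, (B:ℝ) - |(i:ℝ)| = (((B:ℤ) - |i| : ℤ) : ℝ) := by
    intro i; push_cast; ring
  constructor
  · have : ∑ j ∈ S, π j
        = (1 - 1/(B:ℝ))⁻¹ * ((∑ j ∈ S, (((B:ℤ) - |j| : ℤ) : ℝ)) / (B:ℝ)^2) := by
      simp only [π, Finset.mul_sum, Finset.sum_div]
      apply Finset.sum_congr rfl
      intro j _
      rw [← hcast j]
    rw [this, ← Int.cast_sum, key1 B hB]
    push_cast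
    field_simp
  · intro j hj
    have hj' := hj
    simp only [S, Finset.mem_erase, Finset.mem_Icc] at hj'
    obtain ⟨hj0, hjl, hjr⟩ := hj'
    have step1 : ∑ i ∈ S, π i * P i j
        = ∑ i ∈ S, (if 1 ≤ i.sign * (i - j) ∧ i.sign * (i - j) ≤ (B:ℤ) ∧ j ≠ 0
            then π i * (1 / ((B:ℝ)-1)) else 0) := by
      apply Finset.sum_congr rfl
      intro i _
      simp only [P, mul_ite, mul_zero]
    rw [step1, ← Finset.sum_filter]
    have step2 : ∑ i ∈ S.filter
          (fun i => 1 ≤ i.sign * (i - j) ∧ i.sign * (i - j) ≤ (B:ℤ) ∧ j ≠ 0),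
          π i * (1 / ((B:ℝ)-1))
        = (1 - 1/(B:ℝ))⁻¹ * (1 / ((B:ℝ)-1)) / (B:ℝ)^2 *
          ((∑ i ∈ S.filter
          (fun i => 1 ≤ i.sign * (i - j) ∧ i.sign * (i - j) ≤ (B:ℤ) ∧ j ≠ 0),
            ((B:ℤ) - |i| : ℤ) : ℤ) : ℝ) := by
      rw [Int.cast_sum, Finset.mul_sum]
      apply Finset.sum_congr rfl
      intro i _
      rw [← hcast i]
      simp only [π]
      ring
    rw [step2, key2 B hB j hj0 hjl hjr]
    simp only [π]
    rw [hcast j]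
    push_cast
    field_simp
end

section
/- In the Kruskal count model with i.i.d. uniform card labels on {1,...,B} and uniform secret numbers, the coupling time t satisfies Prob[t > N] ≤ (1 - 1/B)^{2N/B - 2} for all N ≥ B. In particular Prob[t > N] decreases exponentially in N. -/
open MeasureTheory ProbabilityTheory
open scoped ENNReal

namespace KruskalAux

/-- One step of the pair process: advance the lagging chain by `c`. -/
def kstep (p : ℕ × ℕ) (c : ℕ) : ℕ × ℕ :=
  if p.1 ≤ p.2 then (p.1 + c, p.2) else (p.1, p.2 + c)

/-- Pair trajectory driven by a sequence of card values `g`. -/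
def ktraj (p : ℕ × ℕ) (g : ℕ → ℕ) : ℕ → ℕ × ℕ
  | 0 => p
  | i + 1 => kstep (ktraj p g i) (g i)

/-- Position tested at step `i`. -/
def kpos (p : ℕ × ℕ) (g : ℕ → ℕ) (i : ℕ) : ℕ :=
  min (ktraj p g i).1 (ktraj p g i).2

/-- Step `i` is a miss. -/
def kmiss (p : ℕ × ℕ) (c : ℕ) : Prop := min p.1 p.2 + c ≠ max p.1 p.2

/-- All of the first `n` steps are misses. -/
def kok (p : ℕ × ℕ) (g : ℕ → ℕ) (n : ℕ) : Prop :=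
  ∀ i < n, kmiss (ktraj p g i) (g i)

instance kmissDec (p : ℕ × ℕ) (c : ℕ) : Decidable (kmiss p c) := by
  unfold kmiss; infer_instance

instance kokDec (p : ℕ × ℕ) (g : ℕ → ℕ) (n : ℕ) : Decidable (kok p g n) := by
  unfold kok; infer_instance

/-- Encoding of a finite card choice as a card sequence with values in `[1,B]`. -/
def toG {n B : ℕ} (γ : Fin n → Fin B) : ℕ → ℕ :=
  fun i => if h : i < n then (γ ⟨i, h⟩ : ℕ) + 1 else 1

/-- Actual pair trajectory read off a deck `v`. -/
def atraj (v : ℕ → ℕ) (p : ℕ × ℕ) : ℕ → ℕ × ℕ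
  | 0 => p
  | i + 1 => kstep (atraj v p i) (v (min (atraj v p i).1 (atraj v p i).2))

/-- The cards actually consumed by the pair process. -/
def aG (v : ℕ → ℕ) (p : ℕ × ℕ) (i : ℕ) : ℕ :=
  v (min (atraj v p i).1 (atraj v p i).2)

lemma ktraj_aG (v : ℕ → ℕ) (p : ℕ × ℕ) (i : ℕ) :
    ktraj p (aG v p) i = atraj v p i := by
  induction i with
  | zero => rfl
  | succ i ih => simp [ktraj, atraj, aG, ih]

lemma ktraj_congr {p : ℕ × ℕ} {g g' : ℕ → ℕ} {i : ℕ}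
    (h : ∀ j < i, g j = g' j) : ktraj p g i = ktraj p g' i := by
  induction i with
  | zero => rfl
  | succ i ih =>
    have : ktraj p g i = ktraj p g' i := ih fun j hj => h j (Nat.lt_succ_of_lt hj)
    simp [ktraj, this, h i (Nat.lt_succ_self i)]

lemma ktraj_shift (p : ℕ × ℕ) (g : ℕ → ℕ) (i : ℕ) :
    ktraj p g (i + 1) = ktraj (kstep p (g 0)) (fun j => g (j + 1)) i := by
  induction i with
  | zero => rfl
  | succ i ih =>
    rw [show ktraj p g (i + 1 + 1) = kstep (ktraj p g (i + 1)) (g (i + 1)) from rfl, ih]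
    rfl

lemma ktraj_one_le {p : ℕ × ℕ} {g : ℕ → ℕ} (h1 : 1 ≤ p.1) (h2 : 1 ≤ p.2)
    (hg : ∀ j, 1 ≤ g j) (i : ℕ) :
    1 ≤ (ktraj p g i).1 ∧ 1 ≤ (ktraj p g i).2 := by
  induction i with
  | zero => exact ⟨h1, h2⟩
  | succ i ih =>
    simp only [ktraj, kstep]
    split <;> simp <;> omega

lemma ktraj_sum_le {p : ℕ × ℕ} {g : ℕ → ℕ} {B : ℕ} (hg : ∀ j, g j ≤ B) (i : ℕ) :
    (ktraj p g i).1 + (ktraj p g i).2 ≤ p.1 + p.2 + i * B := by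
  induction i with
  | zero => show p.1 + p.2 ≤ p.1 + p.2 + 0 * B; omega
  | succ i ih =>
    have := hg i
    have hring : i * B + B = (i + 1) * B := by ring
    simp only [ktraj, kstep]
    split <;> dsimp only <;> omega

lemma ktraj_ne {p : ℕ × ℕ} {g : ℕ → ℕ} {n : ℕ} (hne : p.1 ≠ p.2)
    (hg : ∀ j, 1 ≤ g j) (hok : kok p g n) :
    ∀ i ≤ n, (ktraj p g i).1 ≠ (ktraj p g i).2 := by
  intro i hi
  induction i with
  | zero => exact hne
  | succ i ih =>
    have hne' := ih (Nat.le_of_succ_le hi)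
    have hmiss := hok i (Nat.lt_of_succ_le hi)
    have := hg i
    unfold kmiss at hmiss
    simp only [ktraj, kstep]
    split <;> simp only [] <;> omega

lemma kpos_lt_succ {p : ℕ × ℕ} {g : ℕ → ℕ} {i : ℕ} (hg : 1 ≤ g i)
    (hne : (ktraj p g i).1 ≠ (ktraj p g i).2) :
    kpos p g i < kpos p g (i + 1) := by
  unfold kpos
  simp only [ktraj, kstep]
  split <;> simp only [] <;> omega

lemma kpos_strictMono {p : ℕ × ℕ} {g : ℕ → ℕ} {n : ℕ} (hne : p.1 ≠ p.2)
    (hg : ∀ j, 1 ≤ g j) (hok : kok p g n) :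
    ∀ i j, i < j → j ≤ n → kpos p g i < kpos p g j := by
  intro i j hij hjn
  induction j with
  | zero => omega
  | succ j ih =>
    have hstep : kpos p g j < kpos p g (j + 1) :=
      kpos_lt_succ (hg j) (ktraj_ne hne hg hok j (Nat.le_of_succ_le hjn))
    rcases Nat.lt_or_ge i j with h | h
    · exact lt_trans (ih h (Nat.le_of_succ_le hjn)) hstep
    · have : i = j := by omega
      subst this; exact hstep

lemma kpos_one_le {p : ℕ × ℕ} {g : ℕ → ℕ} (h1 : 1 ≤ p.1) (h2 : 1 ≤ p.2)
    (hg : ∀ j, 1 ≤ g j) (i : ℕ) : 1 ≤ kpos p g i := by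
  have := ktraj_one_le h1 h2 hg i
  unfold kpos; omega

/-- The two components of the actual trajectory are key positions. -/
lemma atraj_mem_keySeq (v : ℕ → ℕ) (s s' : ℕ) (i : ℕ) :
    (∃ n, keySeq v s n = (atraj v (s, s') i).1) ∧
    (∃ n, keySeq v s' n = (atraj v (s, s') i).2) := by
  induction i with
  | zero => exact ⟨⟨0, rfl⟩, ⟨0, rfl⟩⟩
  | succ i ih =>
    obtain ⟨⟨n1, h1⟩, ⟨n2, h2⟩⟩ := ih
    by_cases h : (atraj v (s, s') i).1 ≤ (atraj v (s, s') i).2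
    · have e : atraj v (s, s') (i + 1)
          = ((atraj v (s, s') i).1 + v ((atraj v (s, s') i).1), (atraj v (s, s') i).2) := by
        simp [atraj, kstep, h, min_eq_left h]
      rw [e]
      exact ⟨⟨n1 + 1, by simp only [keySeq, h1]⟩, ⟨n2, h2⟩⟩
    · have h' : (atraj v (s, s') i).2 ≤ (atraj v (s, s') i).1 := le_of_not_ge h
      have e : atraj v (s, s') (i + 1)
          = ((atraj v (s, s') i).1, (atraj v (s, s') i).2 + v ((atraj v (s, s') i).2)) := by
        simp [atraj, kstep, h, min_eq_right h']
      rw [e]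
      exact ⟨⟨n1, h1⟩, ⟨n2 + 1, by simp only [keySeq, h2]⟩⟩

/-- Arithmetic bound: before step `(2N)/B - 2`, both positions are `≤ N`. -/
lemma max_ktraj_le {p : ℕ × ℕ} {g : ℕ → ℕ} {B N : ℕ} (hB : 1 ≤ B)
    (hg1 : ∀ j, 1 ≤ g j) (hgB : ∀ j, g j ≤ B)
    (hp1 : p.1 ≤ B) (hp2 : p.2 ≤ B) (hBN : B ≤ N) :
    ∀ i, i + 3 ≤ (2 * N) / B → max (ktraj p g i).1 (ktraj p g i).2 ≤ N := by
  intro i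
  induction i with
  | zero => intro _; simp [ktraj]; omega
  | succ i ih =>
    intro hi
    have hmaxi : max (ktraj p g i).1 (ktraj p g i).2 ≤ N := ih (by omega)
    by_contra hgt
    push_neg at hgt
    have hsum : (ktraj p g (i+1)).1 + (ktraj p g (i+1)).2 ≤ p.1 + p.2 + (i+1) * B :=
      ktraj_sum_le hgB (i + 1)
    have hMb : ((2 * N) / B) * B ≤ 2 * N := Nat.div_mul_le_self _ _
    have hc := hgB i
    have hc1 := hg1 i
    -- from the step structure: sum at i+1 exceeds 2N - B
    have hkey : 2 * N < (ktraj p g (i+1)).1 + (ktraj p g (i+1)).2 + B := by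
      rcases le_or_gt (ktraj p g i).1 (ktraj p g i).2 with h | h
      · have e : ktraj p g (i + 1) = ((ktraj p g i).1 + g i, (ktraj p g i).2) := by
          simp [ktraj, kstep, h]
        rw [e] at hgt ⊢
        dsimp only at hgt ⊢
        omega
      · have e : ktraj p g (i + 1) = ((ktraj p g i).1, (ktraj p g i).2 + g i) := by
          simp [ktraj, kstep, Nat.not_le.mpr h]
        rw [e] at hgt ⊢
        dsimp only at hgt ⊢
        omega
    have hmul : (i + 4) * B ≤ ((2 * N) / B) * B := Nat.mul_le_mul_right _ (by omega)
    have hring : (i + 1) * B + 3 * B = (i + 4) * B := by ring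
    omega



lemma toG_zero {n B : ℕ} (γ : Fin (n + 1) → Fin B) : toG γ 0 = (γ 0 : ℕ) + 1 := by
  simp [toG]

lemma toG_tail {n B : ℕ} (γ : Fin (n + 1) → Fin B) :
    (fun j => toG γ (j + 1)) = toG (Fin.tail γ) := by
  funext j
  by_cases h : j < n
  · simp [toG, h, Nat.succ_lt_succ h, Fin.tail]
  · simp [toG, h, fun hh => h (Nat.lt_of_succ_lt_succ hh)]

lemma kok_succ_iff {n B : ℕ} (p : ℕ × ℕ) (γ : Fin (n + 1) → Fin B) :
    kok p (toG γ) (n + 1) ↔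
      kmiss p ((γ 0 : ℕ) + 1) ∧ kok (kstep p ((γ 0 : ℕ) + 1)) (toG (Fin.tail γ)) n := by
  have hshift : ∀ i, ktraj p (toG γ) (i + 1)
      = ktraj (kstep p ((γ 0 : ℕ) + 1)) (toG (Fin.tail γ)) i := by
    intro i
    rw [ktraj_shift, toG_zero, toG_tail]
  constructor
  · intro h
    refine ⟨?_, ?_⟩
    · have := h 0 (Nat.succ_pos n)
      rwa [show ktraj p (toG γ) 0 = p from rfl, toG_zero] at this
    · intro i hi
      have := h (i + 1) (Nat.succ_lt_succ hi)
      rwa [hshift i, show toG γ (i + 1) = toG (Fin.tail γ) i from congrFun (toG_tail γ) i]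
        at this
  · rintro ⟨h0, h1⟩
    intro i hi
    cases i with
    | zero => rwa [show ktraj p (toG γ) 0 = p from rfl, toG_zero]
    | succ i =>
      rw [hshift i, show toG γ (i + 1) = toG (Fin.tail γ) i from congrFun (toG_tail γ) i]
      exact h1 i (Nat.lt_of_succ_lt_succ hi)

lemma kstep_invariant {p : ℕ × ℕ} {c B : ℕ} (hne : p.1 ≠ p.2)
    (hgap : max p.1 p.2 ≤ min p.1 p.2 + B) (hc1 : 1 ≤ c) (hcB : c ≤ B)
    (hmiss : kmiss p c) :
    (kstep p c).1 ≠ (kstep p c).2 ∧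
      max (kstep p c).1 (kstep p c).2 ≤ min (kstep p c).1 (kstep p c).2 + B := by
  unfold kstep
  unfold kmiss at hmiss
  split <;> dsimp only <;> omega

set_option maxHeartbeats 1000000 in
lemma count_ok {B : ℕ} (hB : 2 ≤ B) :
    ∀ (n : ℕ) (p : ℕ × ℕ), p.1 ≠ p.2 → max p.1 p.2 ≤ min p.1 p.2 + B →
    (Finset.univ.filter fun γ : Fin n → Fin B => kok p (toG γ) n).card ≤ (B - 1) ^ n := by
  intro n
  induction n with
  | zero =>
    intro p _ _
    have : (Finset.univ.filter fun γ : Fin 0 → Fin B => kok p (toG γ) 0) = Finset.univ := by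
      apply Finset.filter_true_of_mem
      intro γ _ i hi
      omega
    rw [this]
    simp
  | succ n ih =>
    intro p hne hgap
    -- a card value that hits
    have h1 : min p.1 p.2 < max p.1 p.2 := by
      rcases Nat.lt_or_ge p.1 p.2 with h | h
      · simp [min_eq_left (le_of_lt h), max_eq_right (le_of_lt h), h]
      · have : p.2 < p.1 := lt_of_le_of_ne h (Ne.symm hne)
        simp [min_eq_right (le_of_lt this), max_eq_left (le_of_lt this), this]
    have hc0 : ¬ kmiss p (((⟨max p.1 p.2 - min p.1 p.2 - 1, by omega⟩ : Fin B) : ℕ) + 1) := by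
      unfold kmiss
      simp only [not_not]
      omega
    set c0 : Fin B := ⟨max p.1 p.2 - min p.1 p.2 - 1, by omega⟩ with hc0def
    -- cover by a union over the first card
    have hcover : (Finset.univ.filter fun γ : Fin (n + 1) → Fin B => kok p (toG γ) (n + 1))
        ⊆ (Finset.univ.filter fun c : Fin B => kmiss p ((c : ℕ) + 1)).biUnion (fun c : Fin B =>
            ((Finset.univ.filter fun γ' : Fin n → Fin B =>
                kok (kstep p ((c : ℕ) + 1)) (toG γ') n).image (Fin.cons (α := fun _ => Fin B) c))) := by
      intro γ hγ
      rw [Finset.mem_filter] at hγ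
      obtain ⟨hm, hk⟩ := (kok_succ_iff p γ).mp hγ.2
      rw [Finset.mem_biUnion]
      refine ⟨γ 0, Finset.mem_filter.mpr ⟨Finset.mem_univ _, hm⟩, ?_⟩
      rw [Finset.mem_image]
      refine ⟨Fin.tail γ, ?_, Fin.cons_self_tail γ⟩
      exact Finset.mem_filter.mpr ⟨Finset.mem_univ _, hk⟩
    have hcard : ∀ c : Fin B, kmiss p ((c : ℕ) + 1) →
        (Finset.univ.filter fun γ' : Fin n → Fin B =>
            kok (kstep p ((c : ℕ) + 1)) (toG γ') n).card ≤ (B - 1) ^ n := by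
      intro c hm
      obtain ⟨h1', h2'⟩ := kstep_invariant hne hgap (Nat.succ_pos _)
        (Nat.succ_le_of_lt c.isLt) hm
      exact ih _ h1' h2'
    have hfiltB : (Finset.univ.filter fun c : Fin B => kmiss p ((c : ℕ) + 1)).card ≤ B - 1 := by
      have hsub : (Finset.univ.filter fun c : Fin B => kmiss p ((c : ℕ) + 1))
          ⊆ Finset.univ.erase c0 := by
        intro c hc
        rw [Finset.mem_filter] at hc
        rw [Finset.mem_erase]
        exact ⟨fun h => hc0 (h ▸ hc.2), Finset.mem_univ _⟩
      calc (Finset.univ.filter fun c : Fin B => kmiss p ((c : ℕ) + 1)).card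
          ≤ (Finset.univ.erase c0).card := Finset.card_le_card hsub
        _ = B - 1 := by
            rw [Finset.card_erase_of_mem (Finset.mem_univ _)]
            simp
    refine le_trans (Finset.card_le_card hcover) ?_
    refine le_trans (Finset.card_biUnion_le
      (s := Finset.univ.filter fun c : Fin B => kmiss p ((c : ℕ) + 1))
      (t := fun c : Fin B => ((Finset.univ.filter fun γ' : Fin n → Fin B =>
          kok (kstep p ((c : ℕ) + 1)) (toG γ') n).image (Fin.cons (α := fun _ => Fin B) c)))) ?_
    have hsum : ∑ c ∈ Finset.univ.filter fun c : Fin B => kmiss p ((c : ℕ) + 1),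
          ((Finset.univ.filter fun γ' : Fin n → Fin B =>
              kok (kstep p ((c : ℕ) + 1)) (toG γ') n).image (Fin.cons (α := fun _ => Fin B) c)).card
        ≤ ∑ c ∈ Finset.univ.filter fun c : Fin B => kmiss p ((c : ℕ) + 1), (B - 1) ^ n := by
      refine Finset.sum_le_sum fun c hc => ?_
      refine le_trans Finset.card_image_le (hcard c (Finset.mem_filter.mp hc).2)
    refine le_trans hsum ?_
    rw [Finset.sum_const, smul_eq_mul]
    calc (Finset.univ.filter fun c : Fin B => kmiss p ((c : ℕ) + 1)).card * (B - 1) ^ n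
        ≤ (B - 1) * (B - 1) ^ n := Nat.mul_le_mul_right _ hfiltB
      _ = (B - 1) ^ (n + 1) := by rw [pow_succ]; ring


variable {Ω : Type*} [MeasureSpace Ω] [IsProbabilityMeasure (ℙ : Measure Ω)]
variable {B : ℕ} {deck : ℕ → Ω → ℕ} {S : Bool → Ω → ℕ}

lemma cyl_meas
    (hIndep : iIndepFun (Sum.elim deck S) ℙ)
    (hdeck : ∀ m k : ℕ, 1 ≤ m → 1 ≤ k → k ≤ B →
      ℙ {ω | deck m ω = k} = (B : ℝ≥0∞)⁻¹)
    (hS : ∀ b, ∀ k : ℕ, 1 ≤ k → k ≤ B → ℙ {ω | S b ω = k} = (B : ℝ≥0∞)⁻¹)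
    (s s' : ℕ) (hs1 : 1 ≤ s) (hsB : s ≤ B) (hs1' : 1 ≤ s') (hsB' : s' ≤ B)
    (n : ℕ) (q w : ℕ → ℕ) (hq1 : ∀ i < n, 1 ≤ q i)
    (hqinj : ∀ i < n, ∀ j < n, q i = q j → i = j)
    (hw : ∀ i < n, 1 ≤ w i ∧ w i ≤ B) :
    ℙ ({ω | S true ω = s} ∩ {ω | S false ω = s'} ∩
        ⋂ i ∈ Finset.range n, {ω | deck (q i) ω = w i}) = (B : ℝ≥0∞)⁻¹ ^ (n + 2) := by
  classical
  set vfun : ℕ → ℕ := fun m => if h : ∃ i, i < n ∧ q i = m then w h.choose else 0 with hvdef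
  have hvfun : ∀ i < n, vfun (q i) = w i := by
    intro i hi
    have hex : ∃ j, j < n ∧ q j = q i := ⟨i, hi, rfl⟩
    rw [hvdef]
    simp only [dif_pos hex]
    have hspec := hex.choose_spec
    have : hex.choose = i := hqinj _ hspec.1 i hi hspec.2
    rw [this]
  set T : Finset (ℕ ⊕ Bool) :=
    ((Finset.range n).image fun i => Sum.inl (q i)) ∪ {Sum.inr true, Sum.inr false} with hTdef
  set sets : ℕ ⊕ Bool → Set ℕ :=
    Sum.elim (fun m => {vfun m}) (fun b => if b then ({s} : Set ℕ) else {s'}) with hsetsdef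
  have hmeas : ∀ j : ℕ ⊕ Bool, j ∈ T → MeasurableSet (sets j) := by
    intro j _
    rcases j with m | b
    · exact measurableSet_singleton _
    · rcases b <;> simp [hsetsdef] <;> exact measurableSet_singleton _
  have hprod := hIndep.measure_inter_preimage_eq_mul T (sets := sets) hmeas
  have hset : ({ω | S true ω = s} ∩ {ω | S false ω = s'} ∩
      ⋂ i ∈ Finset.range n, {ω | deck (q i) ω = w i})
      = ⋂ j ∈ T, Sum.elim deck S j ⁻¹' sets j := by
    ext ω
    simp only [Set.mem_inter_iff, Set.mem_setOf_eq, Set.mem_iInter, Set.mem_preimage,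
      Finset.mem_range, hTdef, Finset.mem_union, Finset.mem_image, Finset.mem_insert,
      Finset.mem_singleton]
    constructor
    · rintro ⟨⟨h1, h2⟩, h3⟩ j hj
      rcases hj with ⟨i, hi, rfl⟩ | rfl | rfl
      · show deck (q i) ω ∈ sets (Sum.inl (q i))
        simp only [hsetsdef, Sum.elim_inl, Set.mem_singleton_iff, hvfun i hi]
        exact h3 i hi
      · show S true ω ∈ sets (Sum.inr true)
        simp [hsetsdef, h1]
      · show S false ω ∈ sets (Sum.inr false)
        simp [hsetsdef, h2]
    · intro h
      refine ⟨⟨?_, ?_⟩, ?_⟩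
      · have := h (Sum.inr true) (Or.inr (Or.inl rfl))
        simpa [hsetsdef] using this
      · have := h (Sum.inr false) (Or.inr (Or.inr rfl))
        simpa [hsetsdef] using this
      · intro i hi
        have := h (Sum.inl (q i)) (Or.inl ⟨i, hi, rfl⟩)
        simp only [hsetsdef, Sum.elim_inl, Set.mem_preimage, Set.mem_singleton_iff,
          hvfun i hi] at this
        exact this
  rw [hset, hprod]
  have hdisj : Disjoint ((Finset.range n).image fun i => Sum.inl (q i) : Finset (ℕ ⊕ Bool))
      ({Sum.inr true, Sum.inr false} : Finset (ℕ ⊕ Bool)) := by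
    rw [Finset.disjoint_left]
    rintro x hx hx'
    obtain ⟨i, _, rfl⟩ := Finset.mem_image.mp hx
    simp at hx'
  rw [hTdef, Finset.prod_union hdisj]
  have hinj : Set.InjOn (fun i => Sum.inl (q i) : ℕ → ℕ ⊕ Bool) (Finset.range n) := by
    intro i hi j hj hij
    simp only [Finset.coe_range, Set.mem_Iio] at hi hj
    exact hqinj i hi j hj (Sum.inl.inj hij)
  rw [Finset.prod_image (fun i hi j hj => hinj hi hj)]
  have hterm : ∀ i ∈ Finset.range n,
      ℙ (Sum.elim deck S (Sum.inl (q i)) ⁻¹' sets (Sum.inl (q i))) = (B : ℝ≥0∞)⁻¹ := by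
    intro i hi
    rw [Finset.mem_range] at hi
    have : (Sum.elim deck S (Sum.inl (q i)) ⁻¹' sets (Sum.inl (q i)))
        = {ω | deck (q i) ω = w i} := by
      ext ω
      simp [hsetsdef, hvfun i hi]
    rw [this]
    exact hdeck (q i) (w i) (hq1 i hi) (hw i hi).1 (hw i hi).2
  rw [Finset.prod_congr rfl hterm, Finset.prod_const, Finset.card_range]
  have hpair : ∏ j ∈ ({Sum.inr true, Sum.inr false} : Finset (ℕ ⊕ Bool)),
      ℙ (Sum.elim deck S j ⁻¹' sets j) = (B : ℝ≥0∞)⁻¹ * (B : ℝ≥0∞)⁻¹ := by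
    rw [Finset.prod_pair (by simp)]
    have h1 : (Sum.elim deck S (Sum.inr true) ⁻¹' sets (Sum.inr true)) = {ω | S true ω = s} := by
      ext ω; simp [hsetsdef]
    have h2 : (Sum.elim deck S (Sum.inr false) ⁻¹' sets (Sum.inr false))
        = {ω | S false ω = s'} := by
      ext ω; simp [hsetsdef]
    rw [h1, h2, hS true s hs1 hsB, hS false s' hs1' hsB']
  rw [hpair]
  ring


end KruskalAux

/-- Kruskal count model with i.i.d. card labels uniform on `{1, …, B}` and both players'
secret numbers independent uniform on `{1, …, B}`: for `N ≥ B` the coupling time `t`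
(first common key position) satisfies `Prob[t > N] ≤ (1 - 1/B)^(2N/B - 2)`, an
exponentially decreasing bound in `N`. -/
theorem uniform_kruskal_tail_bound {Ω : Type*} [MeasureSpace Ω]
    [IsProbabilityMeasure (ℙ : Measure Ω)] (B : ℕ) (hB : 2 ≤ B)
    (deck : ℕ → Ω → ℕ) (S : Bool → Ω → ℕ)
    (hdeckMeas : ∀ m, Measurable (deck m)) (hSMeas : ∀ b, Measurable (S b))
    (hIndep : iIndepFun (Sum.elim deck S) ℙ)
    (hdeck : ∀ m k : ℕ, 1 ≤ m → 1 ≤ k → k ≤ B →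
      ℙ {ω | deck m ω = k} = (B : ℝ≥0∞)⁻¹)
    (hdeckRange : ∀ m, 1 ≤ m → ℙ {ω | 1 ≤ deck m ω ∧ deck m ω ≤ B} = 1)
    (hS : ∀ b, ∀ k : ℕ, 1 ≤ k → k ≤ B → ℙ {ω | S b ω = k} = (B : ℝ≥0∞)⁻¹)
    (N : ℕ) (hN : B ≤ N) :
    ℙ {ω | ∀ m ≤ N, ¬((∃ n, keySeq (fun i => deck i ω) (S true ω) n = m) ∧
        (∃ n, keySeq (fun i => deck i ω) (S false ω) n = m))}
      ≤ ENNReal.ofReal ((1 - 1 / (B : ℝ)) ^ (2 * (N : ℝ) / (B : ℝ) - 2)) := by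
  open KruskalAux in
  set E : Set Ω := {ω | ∀ m ≤ N, ¬((∃ n, keySeq (fun i => deck i ω) (S true ω) n = m) ∧
      (∃ n, keySeq (fun i => deck i ω) (S false ω) n = m))} with hEdef
  set K : ℕ := (2 * N) / B - 2 with hKdef
  have hB0 : 0 < B := by omega
  have hKB : 2 ≤ (2 * N) / B := by
    have h1 : (2 * B) / B ≤ (2 * N) / B := Nat.div_le_div_right (by omega)
    have h2 : (2 * B) / B = 2 := Nat.mul_div_cancel 2 hB0
    omega
  -- the good event
  set R : Set Ω := {ω | (∀ m, 1 ≤ m → 1 ≤ deck m ω ∧ deck m ω ≤ B) ∧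
      (∀ b, 1 ≤ S b ω ∧ S b ω ≤ B)} with hRdef
  -- ℙ Rᶜ = 0
  have hRnull : ℙ Rᶜ = 0 := by
    have hsub : Rᶜ ⊆ (⋃ m : ℕ, {ω | 1 ≤ m ∧ ¬(1 ≤ deck m ω ∧ deck m ω ≤ B)})
        ∪ (⋃ b : Bool, {ω | ¬(1 ≤ S b ω ∧ S b ω ≤ B)}) := by
      intro ω hω
      rw [Set.mem_compl_iff, hRdef, Set.mem_setOf_eq] at hω
      by_cases hd : ∀ m, 1 ≤ m → 1 ≤ deck m ω ∧ deck m ω ≤ B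
      · right
        have hb : ¬ ∀ b, 1 ≤ S b ω ∧ S b ω ≤ B := fun h => hω ⟨hd, h⟩
        push_neg at hb
        obtain ⟨b, hb⟩ := hb
        refine Set.mem_iUnion.mpr ⟨b, ?_⟩
        simp only [Set.mem_setOf_eq]
        intro h
        have := hb h.1
        omega
      · left
        push_neg at hd
        obtain ⟨m, hm1, hm2⟩ := hd
        refine Set.mem_iUnion.mpr ⟨m, ?_⟩
        simp only [Set.mem_setOf_eq]
        exact ⟨hm1, fun h => by omega⟩
    have hdeckzero : ∀ m : ℕ, ℙ {ω | 1 ≤ m ∧ ¬(1 ≤ deck m ω ∧ deck m ω ≤ B)} = 0 := by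
      intro m
      rcases Nat.lt_or_ge m 1 with hm | hm
      · have : {ω | 1 ≤ m ∧ ¬(1 ≤ deck m ω ∧ deck m ω ≤ B)} = ∅ := by
          ext ω
          simp only [Set.mem_setOf_eq, Set.mem_empty_iff_false, iff_false, not_and]
          omega
        rw [this]; simp
      · have heq : {ω | 1 ≤ m ∧ ¬(1 ≤ deck m ω ∧ deck m ω ≤ B)}
            = {ω | 1 ≤ deck m ω ∧ deck m ω ≤ B}ᶜ := by
          ext ω
          simp only [Set.mem_setOf_eq, Set.mem_compl_iff, hm, true_and]
        rw [heq]
        have hmeas : MeasurableSet {ω | 1 ≤ deck m ω ∧ deck m ω ≤ B} := by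
          have : {ω | 1 ≤ deck m ω ∧ deck m ω ≤ B}
              = deck m ⁻¹' {x | 1 ≤ x ∧ x ≤ B} := rfl
          rw [this]
          exact hdeckMeas m (by trivial)
        rw [prob_compl_eq_zero_iff hmeas]
        exact hdeckRange m hm
    have hSone : ∀ b, ℙ {ω | 1 ≤ S b ω ∧ S b ω ≤ B} = 1 := by
      intro b
      have heq : {ω | 1 ≤ S b ω ∧ S b ω ≤ B} = ⋃ k ∈ Finset.Icc 1 B, {ω | S b ω = k} := by
        ext ω
        simp only [Set.mem_setOf_eq, Set.mem_iUnion, Finset.mem_Icc]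
        constructor
        · rintro ⟨h1, h2⟩; exact ⟨S b ω, ⟨h1, h2⟩, rfl⟩
        · rintro ⟨k, ⟨h1, h2⟩, hk⟩; rw [hk]; exact ⟨h1, h2⟩
      rw [heq, measure_biUnion_finset]
      · have : ∀ k ∈ Finset.Icc 1 B, ℙ {ω | S b ω = k} = (B : ℝ≥0∞)⁻¹ := by
          intro k hk
          rw [Finset.mem_Icc] at hk
          exact hS b k hk.1 hk.2
        rw [Finset.sum_congr rfl this, Finset.sum_const, Nat.card_Icc]
        simp only [Nat.add_sub_cancel, nsmul_eq_mul]
        rw [ENNReal.mul_inv_cancel (by exact_mod_cast hB0.ne') (by simp)]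
      · intro k _ l _ hkl
        simp only [Function.onFun]
        rw [Set.disjoint_left]
        intro ω h1 h2
        simp only [Set.mem_setOf_eq] at h1 h2
        exact hkl (h1 ▸ h2 ▸ rfl)
      · intro k _
        exact hSMeas b (measurableSet_singleton k)
    have h1 : ℙ (⋃ m : ℕ, {ω | 1 ≤ m ∧ ¬(1 ≤ deck m ω ∧ deck m ω ≤ B)}) = 0 := by
      refine le_antisymm (le_trans (measure_iUnion_le _) ?_) (zero_le)
      exact le_of_eq (ENNReal.tsum_eq_zero.mpr hdeckzero)
    have h2 : ℙ (⋃ b : Bool, {ω | ¬(1 ≤ S b ω ∧ S b ω ≤ B)}) = 0 := by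
      refine le_antisymm (le_trans (measure_iUnion_le _) ?_) (zero_le)
      have : ∀ b, ℙ {ω | ¬(1 ≤ S b ω ∧ S b ω ≤ B)} = 0 := by
        intro b
        have heq : {ω | ¬(1 ≤ S b ω ∧ S b ω ≤ B)} = {ω | 1 ≤ S b ω ∧ S b ω ≤ B}ᶜ := rfl
        have hmeas : MeasurableSet {ω | 1 ≤ S b ω ∧ S b ω ≤ B} := by
          have : {ω | 1 ≤ S b ω ∧ S b ω ≤ B} = S b ⁻¹' {x | 1 ≤ x ∧ x ≤ B} := rfl
          rw [this]
          exact hSMeas b (by trivial)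
        rw [heq, prob_compl_eq_zero_iff hmeas]
        exact hSone b
      exact le_of_eq (ENNReal.tsum_eq_zero.mpr this)
    refine le_antisymm (le_trans (measure_mono hsub) ?_) (zero_le)
    refine le_trans (measure_union_le _ _) ?_
    rw [h1, h2]
    simp
  -- the cylinders
  set Cyl : ℕ × ℕ × (Fin K → Fin B) → Set Ω := fun x =>
    {ω | S true ω = x.1} ∩ {ω | S false ω = x.2.1} ∩
      ⋂ i ∈ Finset.range K,
        {ω | deck (kpos (x.1, x.2.1) (toG x.2.2) i) ω = toG x.2.2 i} with hCyldef
  set V : Finset (ℕ × ℕ × (Fin K → Fin B)) :=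
    (Finset.Icc 1 B ×ˢ Finset.Icc 1 B ×ˢ (Finset.univ : Finset (Fin K → Fin B))).filter
      (fun x => x.1 ≠ x.2.1 ∧ kok (x.1, x.2.1) (toG x.2.2) K) with hVdef
  -- inclusion
  have hincl : E ∩ R ⊆ ⋃ x ∈ V, Cyl x := by
    rintro ω ⟨hE, hR⟩
    rw [hRdef, Set.mem_setOf_eq] at hR
    obtain ⟨hRdeck, hRS⟩ := hR
    set v : ℕ → ℕ := fun m => deck m ω with hvdef
    set v' : ℕ → ℕ := fun m => if 1 ≤ v m ∧ v m ≤ B then v m else 1 with hv'def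
    have hv'1 : ∀ m, 1 ≤ v' m := by
      intro m; rw [hv'def]; dsimp only; split <;> omega
    have hv'B : ∀ m, v' m ≤ B := by
      intro m; rw [hv'def]; dsimp only; split <;> omega
    have hveq : ∀ m, 1 ≤ m → v m = v' m := by
      intro m hm
      rw [hv'def]; dsimp only
      rw [if_pos (hRdeck m hm)]
    set s : ℕ := S true ω with hsdef
    set s' : ℕ := S false ω with hs'def
    have hs1 : 1 ≤ s := (hRS true).1
    have hsB : s ≤ B := (hRS true).2
    have hs1' : 1 ≤ s' := (hRS false).1
    have hsB' : s' ≤ B := (hRS false).2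
    set p : ℕ × ℕ := (s, s') with hpdef
    set g : ℕ → ℕ := aG v' p with hgdef
    have hg1 : ∀ j, 1 ≤ g j := fun j => hv'1 _
    have hgB : ∀ j, g j ≤ B := fun j => hv'B _
    -- keySeq translation
    have hkey : ∀ t : ℕ, 1 ≤ t → ∀ n, keySeq v t n = keySeq v' t n := by
      intro t ht
      have hpos : ∀ n, 1 ≤ keySeq v' t n := by
        intro n
        induction n with
        | zero => exact ht
        | succ n ih => simp only [keySeq]; have := hv'1 (keySeq v' t n); omega
      intro n
      induction n with
      | zero => rfl
      | succ n ih =>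
        simp only [keySeq, ih]
        rw [hveq _ (hpos n)]
    have hEv : ∀ m ≤ N, ¬((∃ n, keySeq v' s n = m) ∧ (∃ n, keySeq v' s' n = m)) := by
      rintro m hm ⟨⟨n1, hn1⟩, ⟨n2, hn2⟩⟩
      refine hE m hm ⟨⟨n1, ?_⟩, ⟨n2, ?_⟩⟩
      · rw [← hsdef, show (fun i => deck i ω) = v from rfl, hkey s hs1 n1]; exact hn1
      · rw [← hs'def, show (fun i => deck i ω) = v from rfl, hkey s' hs1' n2]; exact hn2
    have hss' : s ≠ s' := by
      intro h
      exact hEv s (le_trans hsB hN) ⟨⟨0, rfl⟩, ⟨0, h ▸ rfl⟩⟩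
    set γ : Fin K → Fin B := fun i => ⟨g i - 1, by have := hg1 i; have := hgB i; omega⟩
      with hγdef
    have hgtoG : ∀ j, j < K → toG γ j = g j := by
      intro j hj
      rw [hγdef]
      simp only [toG, dif_pos hj]
      have := hg1 j
      omega
    have htraj : ∀ i, i ≤ K → ktraj p (toG γ) i = ktraj p g i := by
      intro i hi
      exact ktraj_congr fun j hj => hgtoG j (lt_of_lt_of_le hj hi)
    -- misses
    have hmiss : ∀ i, i < K → kmiss (ktraj p g i) (g i) := by
      intro i hi
      have hmax : max (ktraj p g i).1 (ktraj p g i).2 ≤ N :=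
        max_ktraj_le (by omega) hg1 hgB hsB hsB' hN i (by omega)
      intro hcon
      rw [ktraj_aG] at hmax hcon
      obtain ⟨⟨n1, hn1⟩, ⟨n2, hn2⟩⟩ := atraj_mem_keySeq v' s s' i
      rw [← hpdef] at hn1 hn2
      have hgi : g i = v' (min (atraj v' p i).1 (atraj v' p i).2) := rfl
      rcases le_or_gt (atraj v' p i).1 (atraj v' p i).2 with hab | hab
      · rw [min_eq_left hab, max_eq_right hab] at hcon
        rw [min_eq_left hab] at hgi
        refine hEv (atraj v' p i).2 (le_trans (le_max_right _ _) hmax) ⟨⟨n1 + 1, ?_⟩, ⟨n2, hn2⟩⟩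
        simp only [keySeq, hn1]
        rw [← hgi]
        exact hcon
      · rw [min_eq_right (le_of_lt hab), max_eq_left (le_of_lt hab)] at hcon
        rw [min_eq_right (le_of_lt hab)] at hgi
        refine hEv (atraj v' p i).1 (le_trans (le_max_left _ _) hmax) ⟨⟨n1, hn1⟩, ⟨n2 + 1, ?_⟩⟩
        simp only [keySeq, hn2]
        rw [← hgi]
        exact hcon
    have hok : kok p (toG γ) K := by
      intro i hi
      rw [htraj i (le_of_lt hi), hgtoG i hi]
      exact hmiss i hi
    refine Set.mem_biUnion (show (s, s', γ) ∈ V from ?_) ?_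
    · rw [hVdef, Finset.mem_filter]
      refine ⟨?_, hss', hok⟩
      rw [Finset.mem_product, Finset.mem_product]
      refine ⟨Finset.mem_Icc.mpr ⟨hs1, hsB⟩, Finset.mem_Icc.mpr ⟨hs1', hsB'⟩, Finset.mem_univ _⟩
    · rw [hCyldef]
      refine ⟨⟨rfl, rfl⟩, ?_⟩
      rw [Set.mem_iInter₂]
      intro i hi
      rw [Finset.mem_range] at hi
      show deck (kpos (s, s') (toG γ) i) ω = toG γ i
      have hq : kpos (s, s') (toG γ) i = kpos p g i := by
        rw [hpdef, kpos, kpos, htraj i (le_of_lt hi)]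
      rw [hq, hgtoG i hi]
      have hpos1 : 1 ≤ kpos p g i := kpos_one_le hs1 hs1' hg1 i
      have : g i = v' (kpos p g i) := by
        rw [hgdef, aG, kpos, ktraj_aG]
      rw [this, ← hveq _ hpos1]
  -- measure of each cylinder
  have hcylmeas : ∀ x ∈ V, ℙ (Cyl x) = (B : ℝ≥0∞)⁻¹ ^ (K + 2) := by
    intro x hx
    rw [hVdef, Finset.mem_filter, Finset.mem_product] at hx
    obtain ⟨⟨hx1, hx2⟩, hne, hok⟩ := hx
    rw [Finset.mem_product] at hx2
    rw [Finset.mem_Icc] at hx1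
    rw [Finset.mem_Icc] at hx2
    have hg1 : ∀ j, 1 ≤ toG x.2.2 j := by
      intro j
      unfold toG
      split <;> omega
    have hgB : ∀ j, j < K → toG x.2.2 j ≤ B := by
      intro j hj
      unfold toG
      rw [dif_pos hj]
      have := (x.2.2 ⟨j, hj⟩).isLt
      omega
    rw [hCyldef]
    refine cyl_meas hIndep hdeck hS x.1 x.2.1 hx1.1 hx1.2 hx2.1.1 hx2.1.2 K _ _
      (fun i _ => kpos_one_le hx1.1 hx2.1.1 hg1 i) ?_ (fun i hi => ⟨hg1 i, hgB i hi⟩)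
    intro i hi j hj hij
    rcases lt_trichotomy i j with h | h | h
    · exact absurd hij (ne_of_lt (kpos_strictMono hne hg1 hok i j h (by omega)))
    · exact h
    · exact absurd hij.symm (ne_of_lt (kpos_strictMono hne hg1 hok j i h (by omega)))
  -- cardinality of V
  have hVcard : V.card ≤ B * ((B - 1) * (B - 1) ^ K) := by
    have hcover : V ⊆ (Finset.Icc 1 B).biUnion fun t =>
        ((Finset.Icc 1 B).erase t).biUnion fun t' =>
          (Finset.univ.filter fun γ : Fin K → Fin B => kok (t, t') (toG γ) K).image
            fun γ => (t, t', γ) := by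
      intro x hx
      rw [hVdef, Finset.mem_filter, Finset.mem_product] at hx
      obtain ⟨⟨hx1, hx2⟩, hne, hok⟩ := hx
      rw [Finset.mem_product] at hx2
      rw [Finset.mem_biUnion]
      refine ⟨x.1, hx1, ?_⟩
      rw [Finset.mem_biUnion]
      refine ⟨x.2.1, Finset.mem_erase.mpr ⟨fun h => hne h.symm, hx2.1⟩, ?_⟩
      rw [Finset.mem_image]
      exact ⟨x.2.2, Finset.mem_filter.mpr ⟨Finset.mem_univ _, hok⟩, rfl⟩
    refine le_trans (Finset.card_le_card hcover) ?_
    refine le_trans (Finset.card_biUnion_le) ?_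
    have hinner : ∀ t ∈ Finset.Icc 1 B,
        (((Finset.Icc 1 B).erase t).biUnion fun t' =>
          (Finset.univ.filter fun γ : Fin K → Fin B => kok (t, t') (toG γ) K).image
            fun γ => (t, t', γ)).card ≤ (B - 1) * (B - 1) ^ K := by
      intro t ht
      refine le_trans (Finset.card_biUnion_le) ?_
      have hterm : ∀ t' ∈ (Finset.Icc 1 B).erase t,
          ((Finset.univ.filter fun γ : Fin K → Fin B => kok (t, t') (toG γ) K).image
            fun γ => (t, t', γ)).card ≤ (B - 1) ^ K := by
        intro t' ht'
        rw [Finset.mem_erase] at ht'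
        rw [Finset.mem_Icc] at ht
        have ht'2 := Finset.mem_Icc.mp ht'.2
        refine le_trans Finset.card_image_le ?_
        refine count_ok hB K (t, t') (fun h => ht'.1 h.symm) ?_
        simp only []
        omega
      refine le_trans (Finset.sum_le_sum hterm) ?_
      rw [Finset.sum_const, smul_eq_mul]
      have : ((Finset.Icc 1 B).erase t).card = B - 1 := by
        rw [Finset.card_erase_of_mem ht, Nat.card_Icc]
        omega
      rw [this]
    refine le_trans (Finset.sum_le_sum hinner) ?_
    rw [Finset.sum_const, smul_eq_mul, Nat.card_Icc]
    exact le_of_eq (by rw [Nat.add_sub_cancel])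
  -- put it together
  have hmain : ℙ E ≤ (V.card : ℝ≥0∞) * (B : ℝ≥0∞)⁻¹ ^ (K + 2) := by
    calc ℙ E ≤ ℙ ((E ∩ R) ∪ Rᶜ) := measure_mono (by
          intro ω hω
          by_cases h : ω ∈ R
          · exact Or.inl ⟨hω, h⟩
          · exact Or.inr h)
      _ ≤ ℙ (E ∩ R) + ℙ Rᶜ := measure_union_le _ _
      _ = ℙ (E ∩ R) := by rw [hRnull, add_zero]
      _ ≤ ℙ (⋃ x ∈ V, Cyl x) := measure_mono hincl
      _ ≤ ∑ x ∈ V, ℙ (Cyl x) := measure_biUnion_finset_le _ _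
      _ = ∑ x ∈ V, (B : ℝ≥0∞)⁻¹ ^ (K + 2) := Finset.sum_congr rfl hcylmeas
      _ = (V.card : ℝ≥0∞) * (B : ℝ≥0∞)⁻¹ ^ (K + 2) := by
          rw [Finset.sum_const, nsmul_eq_mul]
  -- arithmetic endgame
  set D : ℕ := B - 1 with hDdef
  have hcast : (V.card : ℝ≥0∞) ≤ ((B * (D * D ^ K) : ℕ) : ℝ≥0∞) := by
    exact_mod_cast hVcard
  have hstep2 : ℙ E ≤ ((D : ℝ≥0∞) * (B : ℝ≥0∞)⁻¹) ^ (K + 1) := by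
    refine le_trans hmain (le_trans (mul_le_mul_left hcast _) (le_of_eq ?_))
    have hBne : (B : ℝ≥0∞) ≠ 0 := by exact_mod_cast hB0.ne'
    have hBtop : (B : ℝ≥0∞) ≠ ⊤ := by simp
    push_cast
    have h1 : (B : ℝ≥0∞) * (B : ℝ≥0∞)⁻¹ = 1 := ENNReal.mul_inv_cancel hBne hBtop
    rw [mul_pow]
    have h2 : (B : ℝ≥0∞) * ((D : ℝ≥0∞) * (D : ℝ≥0∞) ^ K) * ((B : ℝ≥0∞)⁻¹) ^ (K + 2)
        = ((B : ℝ≥0∞) * (B : ℝ≥0∞)⁻¹) *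
          ((D : ℝ≥0∞) ^ (K + 1) * ((B : ℝ≥0∞)⁻¹) ^ (K + 1)) := by ring
    rw [h2, h1, one_mul]
  have hBR : (0 : ℝ) < B := by exact_mod_cast hB0
  have hxval : ((D : ℝ≥0∞) * (B : ℝ≥0∞)⁻¹) = ENNReal.ofReal ((D : ℝ) / (B : ℝ)) := by
    rw [ENNReal.ofReal_div_of_pos hBR, ENNReal.ofReal_natCast, ENNReal.ofReal_natCast,
      div_eq_mul_inv]
  have hDB : (D : ℝ) / (B : ℝ) = 1 - 1 / (B : ℝ) := by
    have : (D : ℝ) = (B : ℝ) - 1 := by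
      rw [hDdef]
      push_cast [Nat.cast_sub (by omega : 1 ≤ B)]
      ring
    rw [this]
    field_simp
  have hx0 : (0 : ℝ) < 1 - 1 / (B : ℝ) := by
    have : 1 / (B : ℝ) ≤ 1 / 2 := by
      apply one_div_le_one_div_of_le
      · norm_num
      · exact_mod_cast hB
    linarith
  have hx1 : 1 - 1 / (B : ℝ) ≤ 1 := by
    have : 0 ≤ 1 / (B : ℝ) := by positivity
    linarith
  have hexp : 2 * (N : ℝ) / (B : ℝ) - 2 ≤ ((K + 1 : ℕ) : ℝ) := by
    have hlt : 2 * N < ((2 * N) / B + 1) * B := by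
      have ha := Nat.div_add_mod (2 * N) B
      have hb' : (2 * N) % B < B := Nat.mod_lt _ hB0
      have hc : ((2 * N) / B + 1) * B = B * ((2 * N) / B) + B := by ring
      omega
    have hltR : 2 * (N : ℝ) < (((2 * N) / B : ℕ) + 1) * (B : ℝ) := by exact_mod_cast hlt
    have hdiv : 2 * (N : ℝ) / (B : ℝ) < (((2 * N) / B : ℕ) : ℝ) + 1 := by
      rw [div_lt_iff₀ hBR]
      linarith
    have hKcast : ((K + 1 : ℕ) : ℝ) = (((2 * N) / B : ℕ) : ℝ) - 1 := by
      rw [hKdef]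
      have : (2 * N) / B - 2 + 1 = (2 * N) / B - 1 := by omega
      rw [this]
      push_cast [Nat.cast_sub (by omega : 1 ≤ (2 * N) / B)]
      ring
    rw [hKcast]
    linarith
  calc ℙ E ≤ ((D : ℝ≥0∞) * (B : ℝ≥0∞)⁻¹) ^ (K + 1) := hstep2
    _ = ENNReal.ofReal ((1 - 1 / (B : ℝ)) ^ (K + 1)) := by
        rw [hxval, hDB, ← ENNReal.ofReal_pow (by linarith)]
    _ = ENNReal.ofReal ((1 - 1 / (B : ℝ)) ^ (((K + 1 : ℕ) : ℝ))) := by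
        rw [Real.rpow_natCast]
    _ ≤ ENNReal.ofReal ((1 - 1 / (B : ℝ)) ^ (2 * (N : ℝ) / (B : ℝ) - 2)) := by
        apply ENNReal.ofReal_le_ofReal
        exact Real.rpow_le_rpow_of_exponent_ge hx0 hx1 hexp
end

section
/- Let α_B^- be defined by: (1/2)α_B^- is the unique positive root of ∑_{i=1}^{B-1} exp(iα) = B. Then as B → ∞, α_B^- = 4/B² + (4/3)/B³ + O(B^{-4}). -/
open Finset Real

private lemma Icc_succ_ins (m : ℕ) : Finset.Icc 1 (m+1) = insert (m+1) (Finset.Icc 1 m) := by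
  ext i; simp only [Finset.mem_Icc, Finset.mem_insert]; omega

private lemma sum_id' (m : ℕ) : ∑ i ∈ Finset.Icc 1 m, (i:ℝ) = m*(m+1)/2 := by
  induction m with
  | zero => simp
  | succ n ih =>
    rw [Icc_succ_ins, Finset.sum_insert (by simp), ih]; push_cast; ring

private lemma sum_sq' (m : ℕ) : ∑ i ∈ Finset.Icc 1 m, (i:ℝ)^2 = m*(m+1)*(2*m+1)/6 := by
  induction m with
  | zero => simp
  | succ n ih =>
    rw [Icc_succ_ins, Finset.sum_insert (by simp), ih]; push_cast; ring

private lemma sum_cube' (m : ℕ) : ∑ i ∈ Finset.Icc 1 m, (i:ℝ)^3 = (m*(m+1)/2)^2 := by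
  induction m with
  | zero => simp
  | succ n ih =>
    rw [Icc_succ_ins, Finset.sum_insert (by simp), ih]; push_cast; ring

private lemma exp_lb {y : ℝ} (hy : 0 ≤ y) : 1 + y + y^2/2 ≤ Real.exp y :=
  Real.quadratic_le_exp_of_nonneg hy

private lemma exp_ub {y : ℝ} (hy : 0 ≤ y) (hy1 : y ≤ 1) :
    Real.exp y ≤ 1 + y + y^2/2 + y^3 := by
  have h := Real.exp_bound' hy hy1 (n := 3) (by norm_num)
  have e : (∑ m ∈ Finset.range 3, y ^ m / m.factorial) = 1 + y + y^2/2 := by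
    norm_num [Finset.sum_range_succ, Nat.factorial]
  rw [e] at h
  norm_num [Nat.factorial] at h
  nlinarith [pow_nonneg hy 3]

set_option maxHeartbeats 1000000 in
/-- Asymptotics of the quantity `a = α_B⁻`, where `a/2` is the unique positive root of
the equation `∑_{i=1}^{B-1} exp(i t) = B`: one has `a = 4/B^2 + (4/3)/B^3 + O(B^{-4})`
as `B → ∞`. -/
theorem alpha_minus_asymptotics :
    ∃ C : ℝ, ∃ B₀ : ℕ, ∀ B : ℕ, B₀ ≤ B → ∀ a : ℝ, 0 < a →
      (∑ i ∈ Finset.Icc 1 (B - 1), Real.exp (i * (a / 2))) = B →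
      |a - 4 / (B : ℝ) ^ 2 - (4 / 3) / (B : ℝ) ^ 3| ≤ C / (B : ℝ) ^ 4 := by
  refine ⟨20, 10, ?_⟩
  intro B hB a ha hsum
  set x : ℝ := (B:ℝ) with hxdef
  have hx : (10:ℝ) ≤ x := by rw [hxdef]; exact_mod_cast hB
  have hx0 : (0:ℝ) < x := by linarith
  set t : ℝ := a/2 with htdef
  have ht : 0 < t := by positivity
  have hmx : ((B-1 : ℕ):ℝ) = x - 1 := by
    rw [Nat.cast_sub (by omega)]; simp [hxdef]
  -- sum computations
  have c1 : ∑ _i ∈ Finset.Icc 1 (B-1), (1:ℝ) = x - 1 := by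
    rw [Finset.sum_const, Nat.card_Icc, nsmul_eq_mul, mul_one, Nat.add_sub_cancel, hmx]
  have c2 : ∑ i ∈ Finset.Icc 1 (B-1), (i:ℝ)*t = ((x-1)*x/2)*t := by
    rw [← Finset.sum_mul, sum_id', hmx]; ring
  have c3 : ∑ i ∈ Finset.Icc 1 (B-1), ((i:ℝ)*t)^2/2 = ((x-1)*x*(2*x-1)/6)*(t^2/2) := by
    rw [Finset.sum_congr rfl (fun i _ => by ring :
        ∀ i ∈ Finset.Icc 1 (B-1), ((i:ℝ)*t)^2/2 = (i:ℝ)^2*(t^2/2)),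
      ← Finset.sum_mul, sum_sq', hmx]; ring
  have c4 : ∑ i ∈ Finset.Icc 1 (B-1), ((i:ℝ)*t)^3 = (((x-1)*x/2)^2)*t^3 := by
    rw [Finset.sum_congr rfl (fun i _ => by ring :
        ∀ i ∈ Finset.Icc 1 (B-1), ((i:ℝ)*t)^3 = (i:ℝ)^3*t^3),
      ← Finset.sum_mul, sum_cube', hmx]; ring
  -- lower bound on the sum gives h1q
  have hsum_lb : ∑ i ∈ Finset.Icc 1 (B-1), (1 + (i:ℝ)*t + ((i:ℝ)*t)^2/2) ≤ x := by
    rw [← hsum]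
    exact Finset.sum_le_sum fun i _ => exp_lb (by positivity)
  rw [Finset.sum_add_distrib, Finset.sum_add_distrib, c1, c2, c3] at hsum_lb
  have h1q : 6*t*(x^2-x) + t^2*(2*x^3-3*x^2+x) ≤ 12 := by nlinarith [hsum_lb]
  have hP0 : (0:ℝ) ≤ x^2 - x := by nlinarith
  have hQ0 : (0:ℝ) ≤ 2*x^3-3*x^2+x := by nlinarith
  have htP : t*(x^2-x) ≤ 2 := by nlinarith [mul_nonneg (sq_nonneg t) hQ0]
  -- each term small
  have hit1 : ∀ i ∈ Finset.Icc 1 (B-1), (i:ℝ)*t ≤ 1 := by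
    intro i hi
    have hi2 : i ≤ B - 1 := (Finset.mem_Icc.1 hi).2
    have hi' : (i:ℝ) ≤ x - 1 := by
      calc (i:ℝ) ≤ ((B-1:ℕ):ℝ) := by exact_mod_cast hi2
      _ = x - 1 := hmx
    nlinarith [mul_le_mul_of_nonneg_right hi' ht.le]
  -- upper bound on the sum gives h2q
  have hsum_ub : x ≤ ∑ i ∈ Finset.Icc 1 (B-1), (1 + (i:ℝ)*t + ((i:ℝ)*t)^2/2 + ((i:ℝ)*t)^3) := by
    rw [← hsum]
    exact Finset.sum_le_sum fun i hi => exp_ub (by positivity) (hit1 i hi)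
  rw [Finset.sum_add_distrib, Finset.sum_add_distrib, Finset.sum_add_distrib,
    c1, c2, c3, c4] at hsum_ub
  have hU : 12 ≤ 6*t*(x^2-x) + t^2*(2*x^3-3*x^2+x) + 3*t^3*(x^2-x)^2 := by
    nlinarith [hsum_ub]
  have htP0 : (0:ℝ) ≤ t*(x^2-x) := mul_nonneg ht.le hP0
  have hcube : (t*(x^2-x))^3 ≤ 8 := by
    have h48 : (0:ℝ) ≤ 4 + 2*(t*(x^2-x)) + (t*(x^2-x))^2 := by positivity
    nlinarith [mul_nonneg (sub_nonneg.2 htP) h48]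
  have h2q : 12*(x^2-x) - 24 ≤ 6*t*(x^2-x)^2 + t^2*((x^2-x)*(2*x^3-3*x^2+x)) := by
    nlinarith [mul_le_mul_of_nonneg_right hU hP0, hcube]
  -- pass to s = t*x^4
  have hy : (0:ℝ) ≤ x - 10 := by linarith
  have hx8 : (0:ℝ) ≤ x^8 := by positivity
  have hs0 : 0 < t*x^4 := by positivity
  have h1s : 6*(t*x^4)*((x^2-x)*x^4) + (t*x^4)^2*(2*x^3-3*x^2+x) ≤ 12*x^8 := by
    linarith [mul_le_mul_of_nonneg_right h1q hx8]
  have h2s : (12*(x^2-x) - 24)*x^8 ≤ 6*(t*x^4)*((x^2-x)^2*x^4) + (t*x^4)^2*((x^2-x)*(2*x^3-3*x^2+x)) := by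
    linarith [mul_le_mul_of_nonneg_right h2q hx8]
  -- certificates
  have hcertA : 12*x^8 < 6*(2*x^2+2/3*x+10)*((x^2-x)*x^4) + (2*x^2+2/3*x+10)^2*(2*x^3-3*x^2+x) := by
    linarith [hy, pow_nonneg hy 2, pow_nonneg hy 3, pow_nonneg hy 4, pow_nonneg hy 5,
      pow_nonneg hy 6]
  have hcertB : 6*(2*x^2+2/3*x-10)*((x^2-x)^2*x^4) + (2*x^2+2/3*x-10)^2*((x^2-x)*(2*x^3-3*x^2+x))
      < (12*(x^2-x) - 24)*x^8 := by
    linarith [hy, pow_nonneg hy 2, pow_nonneg hy 3, pow_nonneg hy 4, pow_nonneg hy 5,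
      pow_nonneg hy 6, pow_nonneg hy 7, pow_nonneg hy 8]
  -- key bounds on s
  have hsp0 : (0:ℝ) < 2*x^2+2/3*x+10 := by nlinarith
  have hsm0 : (0:ℝ) < 2*x^2+2/3*x-10 := by nlinarith
  have hkey1 : t*x^4 ≤ 2*x^2 + 2/3*x + 10 := by
    by_contra hc
    push_neg at hc
    have hmono : 6*(2*x^2+2/3*x+10)*((x^2-x)*x^4) + (2*x^2+2/3*x+10)^2*(2*x^3-3*x^2+x)
        ≤ 6*(t*x^4)*((x^2-x)*x^4) + (t*x^4)^2*(2*x^3-3*x^2+x) := by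
      linarith [mul_nonneg (sub_nonneg.2 hc.le)
        (by positivity : (0:ℝ) ≤ 6*((x^2-x)*x^4) + ((t*x^4) + (2*x^2+2/3*x+10))*(2*x^3-3*x^2+x))]
    linarith
  have hkey2 : 2*x^2 + 2/3*x - 10 ≤ t*x^4 := by
    by_contra hc
    push_neg at hc
    have hmono : 6*(t*x^4)*((x^2-x)^2*x^4) + (t*x^4)^2*((x^2-x)*(2*x^3-3*x^2+x))
        ≤ 6*(2*x^2+2/3*x-10)*((x^2-x)^2*x^4)
          + (2*x^2+2/3*x-10)^2*((x^2-x)*(2*x^3-3*x^2+x)) := by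
      linarith [mul_nonneg (sub_nonneg.2 hc.le)
        (by positivity : (0:ℝ) ≤ 6*((x^2-x)^2*x^4) + ((t*x^4) + (2*x^2+2/3*x-10))*((x^2-x)*(2*x^3-3*x^2+x)))]
    linarith
  -- conclusion
  have hx4 : (0:ℝ) < x^4 := by positivity
  have hxne : x ≠ 0 := ne_of_gt hx0
  have haa : a = 2*t := by rw [htdef]; ring
  have e : a - 4/x^2 - 4/3/x^3 = (2*(t*x^4) - 4*x^2 - 4/3*x)/x^4 := by
    rw [haa]; field_simp
  rw [abs_le, e]
  constructor
  · rw [show -(20/x^4) = (-20)/x^4 by ring]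
    exact (div_le_div_iff_of_pos_right hx4).mpr (by linarith)
  · exact (div_le_div_iff_of_pos_right hx4).mpr (by linarith)
end

section
/- Let α_B^+ be defined by: (1/2)α_B^+ is the unique positive root of ∑_{i=1}^{B-1} exp((i+1)α) = B. Then as B → ∞, α_B^+ = 4/B² - (20/3)/B³ + O(B^{-4}). -/
open Finset

set_option maxHeartbeats 1000000 in
private lemma keyP (u : ℝ) (hu : 1000 ≤ u) :
    u * u^8 < (u-1)*u^8 + (2*u^2 - 10/3*u + 100)*u^4*((u-1)*((u-1)+3)/2)
      + (2*u^2 - 10/3*u + 100)^2/2*(((u-1)+1)*((u-1)+2)*(2*(u-1)+3)/6 - 1) := by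
  have hu0 : (0:ℝ) < u := by linarith
  have g : ∀ k : ℕ, 1000 * u ^ (k+1) ≤ u * u ^ (k+1) := fun k =>
    mul_le_mul_of_nonneg_right hu (by positivity)
  have g1 : 1000 * u ≤ u ^ 2 := by have := g 0; nlinarith [this]
  have g2 : 1000 * u ^ 2 ≤ u ^ 3 := by have := g 1; nlinarith [this]
  have g3 : 1000 * u ^ 3 ≤ u ^ 4 := by have := g 2; nlinarith [this]
  have g4 : 1000 * u ^ 4 ≤ u ^ 5 := by have := g 3; nlinarith [this]
  have g5 : 1000 * u ^ 5 ≤ u ^ 6 := by have := g 4; nlinarith [this]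
  have g6 : 1000 * u ^ 6 ≤ u ^ 7 := by have := g 5; nlinarith [this]
  have g7 : 1000 * u ^ 7 ≤ u ^ 8 := by have := g 6; nlinarith [this]
  have g8 : 1000 * u ^ 8 ≤ u ^ 9 := by have := g 7; nlinarith [this]
  have g9 : 1000 * u ^ 9 ≤ u ^ 10 := by have := g 8; nlinarith [this]
  nlinarith [hu, g1, g2, g3, g4, g5]

set_option maxHeartbeats 1000000 in
private lemma keyM (u : ℝ) (hu : 1000 ≤ u) :
    (u-1)*u^12 + (2*u^2 - 10/3*u - 100)*u^8*((u-1)*((u-1)+3)/2)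
      + (2*u^2 - 10/3*u - 100)^2*u^4/2*(((u-1)+1)*((u-1)+2)*(2*(u-1)+3)/6 - 1)
      + (2/9)*(2*u^2 - 10/3*u - 100)^3*(((((u-1)+1)*((u-1)+2))/2)^2 - 1) < u * u^12 := by
  have hu0 : (0:ℝ) < u := by linarith
  have g : ∀ k : ℕ, 1000 * u ^ (k+1) ≤ u * u ^ (k+1) := fun k =>
    mul_le_mul_of_nonneg_right hu (by positivity)
  have g1 : 1000 * u ≤ u ^ 2 := by have := g 0; nlinarith [this]
  have g2 : 1000 * u ^ 2 ≤ u ^ 3 := by have := g 1; nlinarith [this]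
  have g3 : 1000 * u ^ 3 ≤ u ^ 4 := by have := g 2; nlinarith [this]
  have g4 : 1000 * u ^ 4 ≤ u ^ 5 := by have := g 3; nlinarith [this]
  have g5 : 1000 * u ^ 5 ≤ u ^ 6 := by have := g 4; nlinarith [this]
  have g6 : 1000 * u ^ 6 ≤ u ^ 7 := by have := g 5; nlinarith [this]
  have g7 : 1000 * u ^ 7 ≤ u ^ 8 := by have := g 6; nlinarith [this]
  have g8 : 1000 * u ^ 8 ≤ u ^ 9 := by have := g 7; nlinarith [this]
  have g9 : 1000 * u ^ 9 ≤ u ^ 10 := by have := g 8; nlinarith [this]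
  nlinarith [hu, g1, g2, g5, g6, g7, g8, g9]

private lemma quad_le_exp {t : ℝ} (ht : 0 ≤ t) : 1 + t + t^2/2 ≤ Real.exp t := by
  have h := Real.sum_le_exp_of_nonneg ht 3
  simp [Finset.sum_range_succ, Nat.factorial] at h
  linarith

private lemma exp_le_cubic {t : ℝ} (ht : 0 ≤ t) (ht1 : t ≤ 1) :
    Real.exp t ≤ 1 + t + t^2/2 + (2/9) * t^3 := by
  have h := Real.exp_bound (x := t) (by rw [abs_of_nonneg ht]; exact ht1) (n := 3) (by norm_num)
  rw [abs_of_nonneg ht] at h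
  have h2 := abs_sub_le_iff.mp h
  simp [Finset.sum_range_succ] at h2
  norm_num [Nat.factorial] at h2
  linarith [h2.1]

private lemma sum_quad (n : ℕ) (p : ℝ) :
    ∑ i ∈ Icc 1 n, (1 + ((i:ℝ)+1)*p + (((i:ℝ)+1)*p)^2/2)
      = n + p*((n:ℝ)*((n:ℝ)+3)/2) + p^2/2*(((n:ℝ)+1)*((n:ℝ)+2)*(2*(n:ℝ)+3)/6 - 1) := by
  induction n with
  | zero => norm_num
  | succ m ih =>
    rw [Finset.sum_Icc_succ_top (by omega), ih]
    push_cast; ring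

private lemma sum_cubic (n : ℕ) (p : ℝ) :
    ∑ i ∈ Icc 1 n, (1 + ((i:ℝ)+1)*p + (((i:ℝ)+1)*p)^2/2 + (2/9)*(((i:ℝ)+1)*p)^3)
      = n + p*((n:ℝ)*((n:ℝ)+3)/2) + p^2/2*(((n:ℝ)+1)*((n:ℝ)+2)*(2*(n:ℝ)+3)/6 - 1)
        + (2/9)*p^3*(((((n:ℝ)+1)*((n:ℝ)+2))/2)^2 - 1) := by
  induction n with
  | zero => norm_num
  | succ m ih =>
    rw [Finset.sum_Icc_succ_top (by omega), ih]
    push_cast; ring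

set_option maxHeartbeats 2000000 in
/-- Asymptotics of `α_B^+`, where `α_B^+/2` is the unique positive root of
`∑_{i=1}^{B-1} exp((i+1) α) = B`:  `α_B^+ = 4/B² - (20/3)/B³ + O(B⁻⁴)` as `B → ∞`. -/
theorem alpha_plus_asymptotics :
    ∃ C : ℝ, ∃ B₀ : ℕ, ∀ B : ℕ, B₀ ≤ B → ∀ a : ℝ, 0 < a →
      (∑ i ∈ Finset.Icc 1 (B - 1), Real.exp ((i + 1) * (a / 2))) = B →
      |a - 4 / (B : ℝ) ^ 2 + (20 / 3) / (B : ℝ) ^ 3| ≤ C / (B : ℝ) ^ 4 := by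
  refine ⟨200, 1000, fun B hB a ha hsum => ?_⟩
  set u : ℝ := (B : ℝ) with hu_def
  have hu : (1000:ℝ) ≤ u := by rw [hu_def]; exact_mod_cast hB
  have hu0 : (0:ℝ) < u := by linarith
  have h1000 : (0:ℝ) ≤ u - 1000 := by linarith
  have hn : ((B - 1 : ℕ) : ℝ) = u - 1 := by
    rw [Nat.cast_sub (by omega)]; simp [hu_def]
  set x : ℝ := a / 2 with hx_def
  have hx0 : 0 < x := by positivity
  -- monotonicity of the sum in the exponent variable
  have gmono : ∀ y z : ℝ, y ≤ z →
      (∑ i ∈ Icc 1 (B-1), Real.exp (((i:ℝ)+1)*y)) ≤ ∑ i ∈ Icc 1 (B-1), Real.exp (((i:ℝ)+1)*z) := by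
    intro y z hyz
    apply Finset.sum_le_sum
    intro i _
    apply Real.exp_le_exp.mpr
    have hi0 : (0:ℝ) ≤ (i:ℝ)+1 := by positivity
    exact mul_le_mul_of_nonneg_left hyz hi0
  have hsum' : (∑ i ∈ Icc 1 (B-1), Real.exp (((i:ℝ)+1)*x)) = u := hsum
  -- upper bound: x < p₊
  have hupper : x < (2*u^2 - 10/3*u + 100)/u^4 := by
    by_contra hcon
    push_neg at hcon
    set p : ℝ := (2*u^2 - 10/3*u + 100)/u^4 with hp_def
    have hp0 : 0 < p := by
      apply div_pos _ (by positivity)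
      nlinarith
    have h1 : ∑ i ∈ Icc 1 (B-1), (1 + ((i:ℝ)+1)*p + (((i:ℝ)+1)*p)^2/2)
        ≤ ∑ i ∈ Icc 1 (B-1), Real.exp (((i:ℝ)+1)*p) :=
      Finset.sum_le_sum (fun i _ => quad_le_exp (by positivity))
    rw [sum_quad, hn] at h1
    have h2 : (∑ i ∈ Icc 1 (B-1), Real.exp (((i:ℝ)+1)*p)) ≤ u := by
      rw [← hsum']; exact gmono p x hcon
    -- polynomial inequality
    have key : u * u^8 < (u-1)*u^8 + (2*u^2 - 10/3*u + 100)*u^4*((u-1)*((u-1)+3)/2)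
        + (2*u^2 - 10/3*u + 100)^2/2*(((u-1)+1)*((u-1)+2)*(2*(u-1)+3)/6 - 1) := keyP u hu
    have heq : (u-1) + p*((u-1)*((u-1)+3)/2) + p^2/2*(((u-1)+1)*((u-1)+2)*(2*(u-1)+3)/6 - 1)
        = ((u-1)*u^8 + (2*u^2 - 10/3*u + 100)*u^4*((u-1)*((u-1)+3)/2)
           + (2*u^2 - 10/3*u + 100)^2/2*(((u-1)+1)*((u-1)+2)*(2*(u-1)+3)/6 - 1)) / u^8 := by
      rw [hp_def]; field_simp
    have hlt : u < (u-1) + p*((u-1)*((u-1)+3)/2) + p^2/2*(((u-1)+1)*((u-1)+2)*(2*(u-1)+3)/6 - 1) := by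
      rw [heq, lt_div_iff₀ (by positivity : (0:ℝ) < u^8)]
      linarith
    linarith
  -- lower bound: p₋ < x
  have hlower : (2*u^2 - 10/3*u - 100)/u^4 < x := by
    by_contra hcon
    push_neg at hcon
    set p : ℝ := (2*u^2 - 10/3*u - 100)/u^4 with hp_def
    have hp0 : 0 < p := by
      apply div_pos _ (by positivity)
      nlinarith
    have hup : u * p ≤ 1 := by
      rw [hp_def, show u * ((2*u^2 - 10/3*u - 100)/u^4) = (u*(2*u^2 - 10/3*u - 100))/u^4 by ring,
        div_le_one (by positivity : (0:ℝ) < u^4)]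
      nlinarith [mul_nonneg (sub_nonneg.mpr hu) (pow_nonneg hu0.le 3),
        pow_nonneg hu0.le 3, pow_nonneg hu0.le 2, hu0.le]
    have ht1 : ∀ i ∈ Icc 1 (B-1), ((i:ℝ)+1)*p ≤ 1 := by
      intro i hi
      simp only [mem_Icc] at hi
      have : (i:ℝ) ≤ u - 1 := by
        have := hi.2
        have h' : (i:ℝ) ≤ ((B-1:ℕ):ℝ) := by exact_mod_cast this
        rwa [hn] at h'
      calc ((i:ℝ)+1)*p ≤ u*p := by
            apply mul_le_mul_of_nonneg_right (by linarith) hp0.le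
        _ ≤ 1 := hup
    have h1 : ∑ i ∈ Icc 1 (B-1), Real.exp (((i:ℝ)+1)*p)
        ≤ ∑ i ∈ Icc 1 (B-1), (1 + ((i:ℝ)+1)*p + (((i:ℝ)+1)*p)^2/2 + (2/9)*(((i:ℝ)+1)*p)^3) :=
      Finset.sum_le_sum (fun i hi => exp_le_cubic (by positivity) (ht1 i hi))
    rw [sum_cubic, hn] at h1
    have h2 : u ≤ ∑ i ∈ Icc 1 (B-1), Real.exp (((i:ℝ)+1)*p) := by
      rw [← hsum']; exact gmono x p hcon
    have key : (u-1)*u^12 + (2*u^2 - 10/3*u - 100)*u^8*((u-1)*((u-1)+3)/2)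
        + (2*u^2 - 10/3*u - 100)^2*u^4/2*(((u-1)+1)*((u-1)+2)*(2*(u-1)+3)/6 - 1)
        + (2/9)*(2*u^2 - 10/3*u - 100)^3*(((((u-1)+1)*((u-1)+2))/2)^2 - 1) < u * u^12 := keyM u hu
    have heq : (u-1) + p*((u-1)*((u-1)+3)/2) + p^2/2*(((u-1)+1)*((u-1)+2)*(2*(u-1)+3)/6 - 1)
        + (2/9)*p^3*(((((u-1)+1)*((u-1)+2))/2)^2 - 1)
        = ((u-1)*u^12 + (2*u^2 - 10/3*u - 100)*u^8*((u-1)*((u-1)+3)/2)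
           + (2*u^2 - 10/3*u - 100)^2*u^4/2*(((u-1)+1)*((u-1)+2)*(2*(u-1)+3)/6 - 1)
           + (2/9)*(2*u^2 - 10/3*u - 100)^3*(((((u-1)+1)*((u-1)+2))/2)^2 - 1)) / u^12 := by
      rw [hp_def]; field_simp
    have hlt : (u-1) + p*((u-1)*((u-1)+3)/2) + p^2/2*(((u-1)+1)*((u-1)+2)*(2*(u-1)+3)/6 - 1)
        + (2/9)*p^3*(((((u-1)+1)*((u-1)+2))/2)^2 - 1) < u := by
      rw [heq, div_lt_iff₀ (by positivity : (0:ℝ) < u^12)]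
      linarith
    linarith
  -- conclude
  have eP : 2 * ((2*u^2 - 10/3*u + 100)/u^4) = 4/u^2 - (20/3)/u^3 + 200/u^4 := by
    field_simp; ring
  have eM : 2 * ((2*u^2 - 10/3*u - 100)/u^4) = 4/u^2 - (20/3)/u^3 - 200/u^4 := by
    field_simp; ring
  have ha2 : a = 2 * x := by rw [hx_def]; ring
  rw [abs_le]
  constructor
  · have := mul_lt_mul_of_pos_left hlower (by norm_num : (0:ℝ) < 2)
    rw [eM] at this
    rw [ha2]; linarith
  · have := mul_lt_mul_of_pos_left hupper (by norm_num : (0:ℝ) < 2)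
    rw [eP] at this
    rw [ha2]; linarith
end

section
/- Let B ≥ 2 and let λ₁ be the unique positive real with ∑_{i=1}^{B-1} e^{iλ₁} = B. Set F = ∑_{i=1}^{B-1} i e^{iλ₁}, γ = 2B/F, and γ_i = 2 e^{iλ₁}/F for 1 ≤ i ≤ B-1. Then the constraints ∑ i γ_i = 2 and ∑ γ_i = γ hold, and the objective Z = -γ log B + γ log γ - ∑_{i=1}^{B-1} γ_i log γ_i equals -2λ₁. -/
/-- Feasibility and objective value of the explicit candidate maximizer of problem `(M⁻)`:
with `λ₁ > 0` the root of `∑_{i=1}^{B-1} e^{iλ₁} = B`, `F = ∑ i e^{iλ₁}`, `γ = 2B/F`,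
`γ_i = 2e^{iλ₁}/F`, the constraints `∑ i γ_i = 2`, `∑ γ_i = γ` hold and
`Z = -γ log B + γ log γ - ∑ γ_i log γ_i = -2λ₁`. -/
theorem objective_value_eq_neg_two_lambda (B : ℕ) (hB : 2 ≤ B) (l : ℝ) (hl : 0 < l)
    (hroot : ∑ i ∈ Finset.Icc 1 (B - 1), Real.exp (i * l) = B) :
    let F : ℝ := ∑ i ∈ Finset.Icc 1 (B - 1), (i : ℝ) * Real.exp (i * l)
    let γ : ℝ := 2 * B / F
    let g : ℕ → ℝ := fun i => 2 * Real.exp (i * l) / F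
    (∑ i ∈ Finset.Icc 1 (B - 1), (i : ℝ) * g i = 2) ∧
    (∑ i ∈ Finset.Icc 1 (B - 1), g i = γ) ∧
    (-γ * Real.log B + γ * Real.log γ
        - ∑ i ∈ Finset.Icc 1 (B - 1), g i * Real.log (g i) = -2 * l) := by
  intro F γ g
  have hne : (Finset.Icc 1 (B - 1)).Nonempty := by
    refine ⟨1, Finset.mem_Icc.mpr ⟨le_refl 1, ?_⟩⟩
    omega
  have hFpos : 0 < F := by
    apply Finset.sum_pos
    · intro i hi
      have hi1 : 1 ≤ i := (Finset.mem_Icc.mp hi).1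
      have : (0 : ℝ) < i := by exact_mod_cast hi1
      exact mul_pos this (Real.exp_pos _)
    · exact hne
  have hFne : F ≠ 0 := ne_of_gt hFpos
  have hBpos : (0 : ℝ) < B := by positivity
  have h1 : ∑ i ∈ Finset.Icc 1 (B - 1), (i : ℝ) * g i = 2 := by
    simp only [g]
    have : ∑ i ∈ Finset.Icc 1 (B - 1), (i : ℝ) * (2 * Real.exp (i * l) / F)
        = (∑ i ∈ Finset.Icc 1 (B - 1), (i : ℝ) * Real.exp (i * l)) * (2 / F) := by
      rw [Finset.sum_mul]
      apply Finset.sum_congr rfl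
      intro i _; ring
    rw [this]
    field_simp
    rfl
  have h2 : ∑ i ∈ Finset.Icc 1 (B - 1), g i = γ := by
    simp only [g, γ]
    rw [← Finset.sum_div, ← Finset.mul_sum, hroot]
  refine ⟨h1, h2, ?_⟩
  have hγ : γ = 2 * B / F := rfl
  have hlogγ : Real.log γ = Real.log 2 + Real.log B - Real.log F := by
    rw [hγ, Real.log_div (by positivity) hFne, Real.log_mul (by norm_num) (ne_of_gt hBpos)]
  have hsum : ∑ i ∈ Finset.Icc 1 (B - 1), g i * Real.log (g i)
      = γ * (Real.log 2 - Real.log F) + 2 * l := by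
    have hterm : ∀ i ∈ Finset.Icc 1 (B - 1),
        g i * Real.log (g i) = g i * (Real.log 2 - Real.log F) + (2 / F) * ((i : ℝ) * l * Real.exp (i * l)) := by
      intro i _
      have : Real.log (g i) = Real.log 2 + i * l - Real.log F := by
        simp only [g]
        rw [Real.log_div (by positivity) hFne,
          Real.log_mul (by norm_num) (ne_of_gt (Real.exp_pos _)), Real.log_exp]
      rw [this]
      simp only [g]
      field_simp
      ring
    rw [Finset.sum_congr rfl hterm, Finset.sum_add_distrib, ← Finset.sum_mul, h2,
      ← Finset.mul_sum]
    have : ∑ i ∈ Finset.Icc 1 (B - 1), (i : ℝ) * l * Real.exp (i * l) = l * F := by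
      simp only [F, Finset.mul_sum]
      apply Finset.sum_congr rfl
      intro i _; ring
    rw [this]
    field_simp
  rw [hsum, hlogγ]
  ring
end

section
/- The characteristic-polynomial root bound for the Haga–Robins chain: the second largest (in modulus) root λ_B of p_B(x) = (x + 1/B)^B - (1 + 1/B)^B x^{B-1} satisfies λ_B = 1 - 2/B + O(1/B²) as B → ∞. -/
open Finset

lemma quad_pow_lb (t : ℝ) (ht : 0 ≤ t) (n : ℕ) :
    1 + n * t + n * (n - 1) / 2 * t ^ 2 ≤ (1 + t) ^ n := by
  induction n with
  | zero => norm_num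
  | succ m ih =>
      have h1 : (0:ℝ) ≤ 1 + t := by linarith
      have h2 := mul_le_mul_of_nonneg_right ih h1
      have hm : (0:ℝ) ≤ (m:ℝ) * ((m:ℝ) - 1) := by
        rcases Nat.eq_zero_or_pos m with h | h
        · subst h; norm_num
        · have : (1:ℝ) ≤ (m:ℝ) := by exact_mod_cast h
          nlinarith
      calc 1 + (↑(m+1)) * t + (↑(m+1)) * ((↑(m+1)) - 1) / 2 * t ^ 2
          ≤ (1 + ↑m * t + ↑m * (↑m - 1) / 2 * t ^ 2) * (1 + t) := by
            push_cast
            nlinarith [mul_nonneg hm (mul_nonneg (mul_nonneg ht ht) ht)]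
        _ ≤ (1 + t) ^ m * (1 + t) := h2
        _ = (1 + t) ^ (m + 1) := by ring

lemma exp_cubic_ub {x : ℝ} (h0 : 0 ≤ x) (h1 : x ≤ 1) :
    Real.exp x ≤ 1 + x + x ^ 2 / 2 + 2 / 9 * x ^ 3 := by
  have hb := Real.exp_bound (by rw [abs_of_nonneg h0]; exact h1) (n := 3) (by norm_num)
  have hs : ∑ m ∈ range 3, x ^ m / m.factorial = 1 + x + x ^ 2 / 2 := by
    simp [Finset.sum_range_succ]
  rw [hs, abs_of_nonneg h0] at hb
  norm_num [Nat.factorial] at hb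
  have := (abs_le.mp hb).2
  nlinarith [this]

lemma sign1 (B : ℕ) (hB : 100 ≤ B) :
    (1 + 1/(B:ℝ))^B * (1 - 2/(B:ℝ))^(B-1) < ((1 - 2/(B:ℝ)) + 1/(B:ℝ))^B := by
  set β : ℝ := (B:ℝ) with hβdef
  have hβ : (100:ℝ) ≤ β := by rw [hβdef]; exact_mod_cast hB
  have hβ0 : (0:ℝ) < β := by linarith
  have hβ2 : (0:ℝ) < β - 2 := by linarith
  have hβ1 : (0:ℝ) < β + 1 := by linarith
  set t : ℝ := 2/((β+1)*(β-2)) with htdef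
  have ht : 0 < t := by positivity
  have hprod : t * ((β+1)*(β-2)) = 2 := by
    rw [htdef]; field_simp
  have ha : (0:ℝ) < 1 - 2/β := by
    rw [sub_pos, div_lt_one hβ0]; linarith
  have hfac : (1 - 2/β) + 1/β = (1+1/β)*(1-2/β)*(1+t) := by
    rw [htdef]; field_simp; ring
  have h6 : 2 < β*(β-1)*t := by nlinarith [hprod, ht]
  have h5 : 1 + (β+1)*t < 1 + β*t + β*(β-1)/2*t^2 := by nlinarith [h6, ht]
  have hq := quad_pow_lb t ht.le B
  rw [← hβdef] at hq
  have h7 : 1 + (β+1)*t < (1+t)^B := lt_of_lt_of_le h5 hq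
  have hexact : (1 - 2/β)*(1+(β+1)*t) = 1 := by
    rw [htdef]; field_simp; ring
  have key : 1 < (1 - 2/β)*(1+t)^B := by
    calc (1:ℝ) = (1 - 2/β)*(1+(β+1)*t) := hexact.symm
      _ < (1 - 2/β)*(1+t)^B := by exact mul_lt_mul_of_pos_left h7 ha
  have hsplit : ((1 - 2/β) + 1/β)^B
      = (1+1/β)^B * (1-2/β)^(B-1) * ((1-2/β)*(1+t)^B) := by
    rw [hfac, mul_pow, mul_pow,
      show (1-2/β)^B = (1-2/β)^(B-1) * (1-2/β) from by
        rw [← pow_succ]; congr 1; omega]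
    ring
  have pos : 0 < (1+1/β)^B * (1-2/β)^(B-1) := by positivity
  calc (1+1/β)^B * (1-2/β)^(B-1) = ((1+1/β)^B * (1-2/β)^(B-1)) * 1 := (mul_one _).symm
    _ < ((1+1/β)^B * (1-2/β)^(B-1)) * ((1-2/β)*(1+t)^B) := by
        exact (mul_lt_mul_iff_right₀ pos).mpr key
    _ = ((1 - 2/β) + 1/β)^B := hsplit.symm

set_option maxHeartbeats 1000000 in
lemma sign2 (B : ℕ) (hB : 100 ≤ B) :
    ((1 - 2/(B:ℝ) + 10/(B:ℝ)^2) + 1/(B:ℝ))^B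
      < (1 + 1/(B:ℝ))^B * (1 - 2/(B:ℝ) + 10/(B:ℝ)^2)^(B-1) := by
  obtain ⟨β, hβdef⟩ : ∃ β : ℝ, β = (B:ℝ) := ⟨_, rfl⟩
  rw [← hβdef]
  have hβ : (100:ℝ) ≤ β := by rw [hβdef]; exact_mod_cast hB
  have hβ0 : (0:ℝ) < β := by linarith
  obtain ⟨b, hbdef⟩ : ∃ b : ℝ, b = 1 - 2/β + 10/β^2 := ⟨_, rfl⟩
  rw [← hbdef]
  have hbex : b = (β^2-2*β+10)/β^2 := by rw [hbdef]; field_simp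
  have hb0 : (0:ℝ) < b := by
    rw [hbex]; exact div_pos (by nlinarith) (by positivity)
  have hb1 : b < 1 := by
    rw [hbdef]
    have : 10/β^2 < 2/β := by
      rw [div_lt_div_iff₀ (by positivity) hβ0]; nlinarith
    linarith
  obtain ⟨s, hsdef⟩ : ∃ s : ℝ, s = (1-b)/((β+1)*b) := ⟨_, rfl⟩
  have hs0 : 0 ≤ s := by
    rw [hsdef]; apply div_nonneg (by linarith) (by positivity)
  have hfac : b + 1/β = (1+1/β)*b*(1+s) := by
    rw [hsdef]; field_simp; ring
  obtain ⟨x, hxdef⟩ : ∃ x : ℝ, x = β * s := ⟨_, rfl⟩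
  have hx0 : 0 ≤ x := by rw [hxdef]; positivity
  have hD0 : (0:ℝ) < (β+1)*(β^2-2*β+10) := by nlinarith
  have hxex : x = β*(2*β-10)/((β+1)*(β^2-2*β+10)) := by
    rw [hxdef, hsdef, hbex]; field_simp; ring_nf
  have hx1 : x ≤ 1 := by
    rw [hxex, div_le_one hD0]; nlinarith
  have hexp : (1+s)^B ≤ Real.exp x := by
    calc (1+s)^B ≤ (Real.exp s)^B :=
          pow_le_pow_left₀ (by linarith) (by linarith [Real.add_one_le_exp s]) B
      _ = Real.exp ((B:ℝ) * s) := (Real.exp_nat_mul s B).symm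
      _ = Real.exp x := by rw [hxdef, hβdef]
  have hcub := exp_cubic_ub hx0 hx1
  have hP : (0:ℝ) < 112*β^8 - 320*β^7 - 584*β^6 + 4096*β^5 - 32648*β^4 + 9760*β^3
      - 79200*β^2 - 216000*β - 180000 := by
    have c1 : β^1*100 ≤ β^2 := by rw [pow_succ]; exact mul_le_mul_of_nonneg_left hβ (by positivity)
    have c2 : β^2*100 ≤ β^3 := by rw [pow_succ]; exact mul_le_mul_of_nonneg_left hβ (by positivity)
    have c3 : β^3*100 ≤ β^4 := by rw [pow_succ]; exact mul_le_mul_of_nonneg_left hβ (by positivity)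
    have c4 : β^4*100 ≤ β^5 := by rw [pow_succ]; exact mul_le_mul_of_nonneg_left hβ (by positivity)
    have c5 : β^5*100 ≤ β^6 := by rw [pow_succ]; exact mul_le_mul_of_nonneg_left hβ (by positivity)
    have c6 : β^6*100 ≤ β^7 := by rw [pow_succ]; exact mul_le_mul_of_nonneg_left hβ (by positivity)
    have c7 : β^7*100 ≤ β^8 := by rw [pow_succ]; exact mul_le_mul_of_nonneg_left hβ (by positivity)
    have p1 : (0:ℝ) < β^1 := by positivity
    have p2 : (0:ℝ) < β^2 := by positivity
    have p3 : (0:ℝ) < β^3 := by positivity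
    have p4 : (0:ℝ) < β^4 := by positivity
    have p5 : (0:ℝ) < β^5 := by positivity
    have p6 : (0:ℝ) < β^6 := by positivity
    have p7 : (0:ℝ) < β^7 := by positivity
    linarith
  have hkey : b * (1 + x + x^2/2 + 2/9*x^3) < 1 := by
    have hiden : b * (1 + x + x^2/2 + 2/9*x^3) - 1
        = -(112*β^8 - 320*β^7 - 584*β^6 + 4096*β^5 - 32648*β^4 + 9760*β^3
            - 79200*β^2 - 216000*β - 180000)
          / (18*β^2*((β+1)*(β^2-2*β+10))^3) := by
      have hb2 : β^2-2*β+10 ≠ 0 := by nlinarith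
      have hb3 : β+1 ≠ 0 := by linarith
      rw [hxex, hbex]
      generalize hD : β^2-2*β+10 = D at hb2 ⊢
      field_simp
      rw [← hD]
      ring
    have hQ : (0:ℝ) < 18*β^2*((β+1)*(β^2-2*β+10))^3 := by positivity
    have hneg : b * (1 + x + x^2/2 + 2/9*x^3) - 1 < 0 := by
      rw [hiden, neg_div, neg_lt_zero]
      exact div_pos hP hQ
    linarith
  have hbound : b * (1+s)^B < 1 :=
    calc b * (1+s)^B ≤ b * (1 + x + x^2/2 + 2/9*x^3) :=
          mul_le_mul_of_nonneg_left (hexp.trans hcub) hb0.le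
      _ < 1 := hkey
  have hsplit : (b + 1/β)^B = (1+1/β)^B * b^(B-1) * (b*(1+s)^B) := by
    rw [hfac, mul_pow, mul_pow,
      show b^B = b^(B-1) * b from by rw [← pow_succ]; congr 1; omega]
    ring
  have pos : 0 < (1+1/β)^B * b^(B-1) := by positivity
  calc (b + 1/β)^B = ((1+1/β)^B * b^(B-1)) * (b*(1+s)^B) := hsplit
    _ < ((1+1/β)^B * b^(B-1)) * 1 := (mul_lt_mul_iff_right₀ pos).mpr hbound
    _ = (1+1/β)^B * b^(B-1) := mul_one _

lemma no_big_roots (B : ℕ) (hB : 1 ≤ B) (z : ℂ) (hz1 : z ≠ 1)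
    (heq : (z + 1/(B:ℂ))^B - (1+1/(B:ℂ))^B * z^(B-1) = 0) : ‖z‖ < 1 := by
  by_contra hcon
  push_neg at hcon
  have hz0 : z ≠ 0 := by
    intro h; rw [h] at hcon; simp at hcon; linarith
  have hB0 : (0:ℝ) < (B:ℝ) := by exact_mod_cast hB
  have hBC : (B:ℂ) ≠ 0 := Nat.cast_ne_zero.mpr (by omega)
  obtain ⟨u, hudef⟩ : ∃ u : ℂ, u = 1/((B:ℂ)*z) := ⟨_, rfl⟩
  have hzu : z + 1/(B:ℂ) = z*(1+u) := by
    rw [hudef]; field_simp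
  have hpow : z^B = z^(B-1) * z := by
    rw [← pow_succ]; congr 1; omega
  have e1 : z * (1+u)^B = (1+1/(B:ℂ))^B := by
    have h0 : z^(B-1) * (z * (1+u)^B) = z^(B-1) * (1+1/(B:ℂ))^B := by
      have : (z*(1+u))^B = (1+1/(B:ℂ))^B * z^(B-1) := by rw [← hzu, sub_eq_zero.mp heq]
      rw [mul_pow] at this
      calc z^(B-1) * (z * (1+u)^B) = z^B * (1+u)^B := by rw [hpow]; ring
        _ = (1+1/(B:ℂ))^B * z^(B-1) := this
        _ = z^(B-1) * (1+1/(B:ℂ))^B := by ring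
    exact mul_left_cancel₀ (pow_ne_zero _ hz0) h0
  have hBuz : (B:ℂ)*u*z = 1 := by rw [hudef]; field_simp
  have e2 : (1+u)^B = (B:ℂ)*(1+1/(B:ℂ))^B * u := by
    calc (1+u)^B = ((B:ℂ)*u*z) * (1+u)^B := by rw [hBuz, one_mul]
      _ = (B:ℂ)*u*(z*(1+u)^B) := by ring
      _ = (B:ℂ)*u*(1+1/(B:ℂ))^B := by rw [e1]
      _ = (B:ℂ)*(1+1/(B:ℂ))^B * u := by ring
  have e3 : (1+1/(B:ℂ))^B = (B:ℂ)*(1+1/(B:ℂ))^B * (1/(B:ℂ)) := by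
    field_simp
  have hune : u - 1/(B:ℂ) ≠ 0 := by
    intro h
    apply hz1
    have hu : u = 1/(B:ℂ) := by linear_combination h
    rw [hudef] at hu
    field_simp at hu
    exact hu.symm
  have hgeom := geom_sum₂_mul (1+u) (1+1/(B:ℂ)) B
  have hS : (∑ i ∈ range B, (1+u)^i * (1+1/(B:ℂ))^(B-1-i)) = (B:ℂ)*(1+1/(B:ℂ))^B := by
    apply mul_right_cancel₀ hune
    calc (∑ i ∈ range B, (1+u)^i * (1+1/(B:ℂ))^(B-1-i)) * (u - 1/(B:ℂ))
        = (∑ i ∈ range B, (1+u)^i * (1+1/(B:ℂ))^(B-1-i)) * ((1+u) - (1+1/(B:ℂ))) := by ring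
      _ = (1+u)^B - (1+1/(B:ℂ))^B := hgeom
      _ = (B:ℂ)*(1+1/(B:ℂ))^B * u - (B:ℂ)*(1+1/(B:ℂ))^B * (1/(B:ℂ)) := by
          rw [← e2, ← e3]
      _ = (B:ℂ)*(1+1/(B:ℂ))^B * (u - 1/(B:ℂ)) := by ring
  -- take absolute values
  have habs1 : ‖1+1/(B:ℂ)‖ = 1 + 1/(B:ℝ) := by
    have : (1+1/(B:ℂ)) = (((1+1/(B:ℝ)):ℝ):ℂ) := by push_cast; ring
    rw [this, Complex.norm_real, Real.norm_eq_abs, abs_of_pos (by positivity)]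
  have habsu : ‖u‖ ≤ 1/(B:ℝ) := by
    rw [hudef]
    rw [norm_div, norm_mul, norm_one, Complex.norm_natCast]
    rw [div_le_div_iff₀ (by positivity) hB0]
    have : (1:ℝ) ≤ ‖z‖ := hcon
    nlinarith [hB0]
  have habs1u : ‖1+u‖ ≤ 1 + 1/(B:ℝ) := by
    calc ‖1+u‖ ≤ ‖1‖ + ‖u‖ := norm_add_le _ _
      _ = 1 + ‖u‖ := by rw [norm_one]
      _ ≤ 1 + 1/(B:ℝ) := by linarith
  have hterm : ∀ i ∈ range B,
      ‖(1+u)^i * (1+1/(B:ℂ))^(B-1-i)‖ ≤ (1+1/(B:ℝ))^(B-1) := by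
    intro i hi
    rw [mem_range] at hi
    rw [norm_mul, norm_pow, norm_pow, habs1]
    calc ‖1+u‖^i * (1+1/(B:ℝ))^(B-1-i)
        ≤ (1+1/(B:ℝ))^i * (1+1/(B:ℝ))^(B-1-i) := by
          apply mul_le_mul_of_nonneg_right (pow_le_pow_left₀ (norm_nonneg _) habs1u i)
          positivity
      _ = (1+1/(B:ℝ))^(B-1) := by rw [← pow_add]; congr 1; omega
  have hsumle : ‖∑ i ∈ range B, (1+u)^i * (1+1/(B:ℂ))^(B-1-i)‖
      ≤ (B:ℝ) * (1+1/(B:ℝ))^(B-1) := by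
    calc ‖∑ i ∈ range B, (1+u)^i * (1+1/(B:ℂ))^(B-1-i)‖
        ≤ ∑ i ∈ range B, ‖(1+u)^i * (1+1/(B:ℂ))^(B-1-i)‖ :=
          norm_sum_le _ _
      _ ≤ ∑ i ∈ range B, (1+1/(B:ℝ))^(B-1) := Finset.sum_le_sum hterm
      _ = (B:ℝ) * (1+1/(B:ℝ))^(B-1) := by
          rw [Finset.sum_const, card_range, nsmul_eq_mul]
  have habsS : ‖∑ i ∈ range B, (1+u)^i * (1+1/(B:ℂ))^(B-1-i)‖
      = (B:ℝ) * (1+1/(B:ℝ))^B := by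
    rw [hS, norm_mul, norm_pow, habs1, Complex.norm_natCast]
  rw [habsS] at hsumle
  have hW : (0:ℝ) < (1+1/(B:ℝ))^(B-1) := by positivity
  have hpowB : (1+1/(B:ℝ))^B = (1+1/(B:ℝ))^(B-1) * (1+1/(B:ℝ)) := by
    rw [← pow_succ]; congr 1; omega
  rw [hpowB] at hsumle
  have h1 : (0:ℝ) < (B:ℝ)*(1+1/(B:ℝ))^(B-1) := by positivity
  have hfin : (1+1/(B:ℝ)) ≤ 1 := by
    apply le_of_mul_le_mul_left _ h1
    calc (B:ℝ)*(1+1/(B:ℝ))^(B-1) * (1+1/(B:ℝ))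
        = (B:ℝ)*((1+1/(B:ℝ))^(B-1)*(1+1/(B:ℝ))) := by ring
      _ ≤ (B:ℝ)*(1+1/(B:ℝ))^(B-1) := hsumle
      _ = (B:ℝ)*(1+1/(B:ℝ))^(B-1) * 1 := (mul_one _).symm
  have hpos : (0:ℝ) < 1/(B:ℝ) := by positivity
  linarith

lemma mono_lemma (B : ℕ) (hB : 100 ≤ B) (ρ : ℝ) (hρ0 : 0 < ρ)
    (hρub : ρ ≤ 1 - 2/(B:ℝ) + 10/(B:ℝ)^2)
    (hρeq : (ρ + 1/(B:ℝ))^B = (1+1/(B:ℝ))^B * ρ^(B-1))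
    (x : ℝ) (hx1 : ρ < x) (hx2 : x < 1) :
    (x + 1/(B:ℝ))^B < (1+1/(B:ℝ))^B * x^(B-1) := by
  obtain ⟨β, hβdef⟩ : ∃ β : ℝ, β = (B:ℝ) := ⟨_, rfl⟩
  rw [← hβdef] at hρub hρeq ⊢
  have hβ : (100:ℝ) ≤ β := by rw [hβdef]; exact_mod_cast hB
  have hβ0 : (0:ℝ) < β := by linarith
  have hx0 : 0 < x := hρ0.trans hx1
  have hm : ρ < 1 - 1/β := by
    have h1 : 10/β^2 < 1/β := by
      rw [div_lt_div_iff₀ (by positivity) hβ0]; nlinarith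
    have h2 : 1 - 2/β + 10/β^2 < 1 - 1/β := by
      have : 1/β + 1/β = 2/β := by ring
      linarith
    linarith
  have hcast : ((B-1:ℕ):ℝ) = β - 1 := by
    rw [hβdef]; rw [Nat.cast_sub (by omega)]; norm_num
  obtain ⟨L, hLdef⟩ : ∃ L : ℝ → ℝ,
      L = fun t => β * Real.log (t + 1/β) - (β-1) * Real.log t := ⟨_, rfl⟩
  have hderiv : ∀ t : ℝ, 0 < t → HasDerivAt L (β/(t+1/β) - (β-1)/t) t := by
    intro t ht
    have h1 : HasDerivAt (fun y : ℝ => y + 1/β) 1 t := (hasDerivAt_id t).add_const _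
    have h2 : HasDerivAt (fun y : ℝ => Real.log (y + 1/β)) (1/(t+1/β)) t := by
      have := h1.log (by positivity : t + 1/β ≠ 0)
      simpa using this
    have h3 : HasDerivAt Real.log t⁻¹ t := Real.hasDerivAt_log (ne_of_gt ht)
    have h4 := (h2.const_mul β).sub (h3.const_mul (β-1))
    rw [hLdef]
    exact h4.congr_deriv (by ring)
  have hcont : ∀ s : Set ℝ, (∀ t ∈ s, 0 < t) → ContinuousOn L s := by
    intro s hs
    exact fun t ht => ((hderiv t (hs t ht)).continuousAt).continuousWithinAt
  -- strict anti on [ρ, 1-1/β]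
  have hanti : StrictAntiOn L (Set.Icc ρ (1-1/β)) := by
    apply strictAntiOn_of_deriv_neg (convex_Icc _ _)
    · exact hcont _ (fun t ht => lt_of_lt_of_le hρ0 ht.1)
    · intro t ht
      rw [interior_Icc] at ht
      have ht0 : 0 < t := hρ0.trans ht.1
      rw [(hderiv t ht0).deriv]
      have htm : t < 1 - 1/β := ht.2
      rw [sub_neg]
      rw [div_lt_div_iff₀ (by positivity) ht0]
      have hfe : (β-1)*(t+1/β) = β*t - t + 1 - 1/β := by field_simp; ring
      linarith
  -- strict mono on [1-1/β, 1]
  have hmono : StrictMonoOn L (Set.Icc (1-1/β) 1) := by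
    apply strictMonoOn_of_deriv_pos (convex_Icc _ _)
    · apply hcont _ (fun t ht => ?_)
      have : (0:ℝ) < 1 - 1/β := by
        have : 1/β ≤ 1/100 := by
          rw [div_le_div_iff₀ hβ0 (by norm_num)]; linarith
        linarith
      linarith [ht.1]
    · intro t ht
      rw [interior_Icc] at ht
      have h01 : (0:ℝ) < 1 - 1/β := by
        have : 1/β ≤ 1/100 := by
          rw [div_le_div_iff₀ hβ0 (by norm_num)]; linarith
        linarith
      have ht0 : 0 < t := h01.trans ht.1
      rw [(hderiv t ht0).deriv]
      rw [sub_pos]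
      rw [div_lt_div_iff₀ ht0 (by positivity)]
      have hfe : (β-1)*(t+1/β) = β*t - t + 1 - 1/β := by field_simp; ring
      linarith [ht.1]
  -- L ρ = L 1
  have hLρ : L ρ = L 1 := by
    have h1 : Real.log ((ρ + 1/β)^B) = Real.log ((1+1/β)^B * ρ^(B-1)) := by rw [hρeq]
    rw [Real.log_mul (by positivity) (by positivity), Real.log_pow, Real.log_pow,
      Real.log_pow, hcast, ← hβdef] at h1
    rw [hLdef]
    simp only
    rw [Real.log_one]
    linarith
  -- L x < L 1
  have hLx : L x < L 1 := by
    rcases le_or_gt x (1 - 1/β) with h | h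
    · have := hanti (Set.mem_Icc.mpr ⟨le_refl ρ, hm.le⟩) (Set.mem_Icc.mpr ⟨hx1.le, h⟩) hx1
      linarith [hLρ]
    · exact hmono (Set.mem_Icc.mpr ⟨h.le, hx2.le⟩) (Set.mem_Icc.mpr ⟨by linarith, le_refl 1⟩) hx2
  -- conclude
  have hA : (0:ℝ) < (x + 1/β)^B := by positivity
  have hBpos : (0:ℝ) < (1+1/β)^B * x^(B-1) := by positivity
  rw [← Real.exp_log hA, ← Real.exp_log hBpos]
  apply Real.exp_lt_exp.mpr
  rw [Real.log_mul (by positivity) (by positivity), Real.log_pow, Real.log_pow,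
    Real.log_pow, hcast, ← hβdef]
  rw [hLdef] at hLx
  simp only at hLx
  rw [Real.log_one] at hLx
  linarith


/-- Haga–Robins second eigenvalue bound: for `p_B(x) = (x + 1/B)^B - (1 + 1/B)^B x^(B-1)`,
if `λ_B` is the largest modulus among the roots of `p_B` other than `x = 1`, then
`λ_B = 1 - 2/B + O(1/B²)` as `B → ∞`. -/
theorem haga_robins_eigenvalue_asymptotics :
    ∃ C : ℝ, ∃ B₀ : ℕ, ∀ B : ℕ, B₀ ≤ B →
      ∃ lB : ℝ,
        IsGreatest {r : ℝ | ∃ z : ℂ, z ≠ 1 ∧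
            (z + 1 / (B : ℂ)) ^ B - (1 + 1 / (B : ℂ)) ^ B * z ^ (B - 1) = 0 ∧
            r = ‖z‖} lB ∧
        |lB - (1 - 2 / (B : ℝ))| ≤ C / (B : ℝ) ^ 2 := by
  refine ⟨10, 100, fun B hB => ?_⟩
  have hβ : (100:ℝ) ≤ (B:ℝ) := by exact_mod_cast hB
  have hβ0 : (0:ℝ) < (B:ℝ) := by linarith
  obtain ⟨f, hfdef⟩ : ∃ f : ℝ → ℝ,
      f = fun x => (x + 1/(B:ℝ))^B - (1+1/(B:ℝ))^B * x^(B-1) := ⟨_, rfl⟩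
  have hfcont : Continuous f := by
    rw [hfdef]
    exact ((continuous_id.add continuous_const).pow B).sub
      (continuous_const.mul (continuous_pow (B-1)))
  have hab : (1 - 2/(B:ℝ)) ≤ 1 - 2/(B:ℝ) + 10/(B:ℝ)^2 := by
    have : (0:ℝ) ≤ 10/(B:ℝ)^2 := by positivity
    linarith
  have hfa : 0 < f (1 - 2/(B:ℝ)) := by
    rw [hfdef]; simp only [sub_pos]; exact sign1 B hB
  have hfb : f (1 - 2/(B:ℝ) + 10/(B:ℝ)^2) < 0 := by
    rw [hfdef]; simp only [sub_neg]; exact sign2 B hB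
  have hsub := intermediate_value_Icc' hab hfcont.continuousOn
  obtain ⟨ρ, hρmem, hρeq0⟩ := hsub (Set.mem_Icc.mpr ⟨hfb.le, hfa.le⟩)
  have hρa : 1 - 2/(B:ℝ) ≤ ρ := hρmem.1
  have hρub : ρ ≤ 1 - 2/(B:ℝ) + 10/(B:ℝ)^2 := hρmem.2
  have h2β : 2/(B:ℝ) ≤ 1/2 := by
    rw [div_le_div_iff₀ hβ0 (by norm_num)]; linarith
  have hρ0 : 0 < ρ := by linarith
  have hρ1 : ρ < 1 := by
    have h1 : 10/(B:ℝ)^2 < 2/(B:ℝ) := by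
      rw [div_lt_div_iff₀ (by positivity) hβ0]; nlinarith
    linarith
  have hρeq : (ρ + 1/(B:ℝ))^B = (1+1/(B:ℝ))^B * ρ^(B-1) := by
    have := hρeq0
    rw [hfdef] at this
    simpa [sub_eq_zero] using this
  have habs1 : ‖1+1/(B:ℂ)‖ = 1 + 1/(B:ℝ) := by
    have h : (1+1/(B:ℂ)) = (((1+1/(B:ℝ)):ℝ):ℂ) := by push_cast; ring
    rw [h, Complex.norm_real, Real.norm_eq_abs, abs_of_pos (by positivity)]
  refine ⟨ρ, ⟨⟨(ρ:ℂ), ?_, ?_, ?_⟩, ?_⟩, ?_⟩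
  · intro h
    rw [Complex.ofReal_eq_one] at h
    linarith [h ▸ hρ1]
  · rw [sub_eq_zero]
    have hC := congrArg (fun r : ℝ => (r : ℂ)) hρeq
    push_cast at hC
    exact hC
  · rw [Complex.norm_real, Real.norm_eq_abs, abs_of_pos hρ0]
  · rintro r ⟨z, hz1, hzeq, rfl⟩
    have hzlt : ‖z‖ < 1 := no_big_roots B (by omega) z hz1 hzeq
    by_contra hgt
    push_neg at hgt
    have hzeq' : (z + 1/(B:ℂ))^B = (1+1/(B:ℂ))^B * z^(B-1) := sub_eq_zero.mp hzeq
    have habs : (‖z + 1/(B:ℂ)‖)^B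
        = (1+1/(B:ℝ))^B * (‖z‖)^(B-1) := by
      have := congrArg Norm.norm hzeq'
      rwa [norm_pow, norm_mul, norm_pow, norm_pow, habs1] at this
    have htri : ‖z + 1/(B:ℂ)‖ ≤ ‖z‖ + 1/(B:ℝ) := by
      calc ‖z + 1/(B:ℂ)‖ ≤ ‖z‖ + ‖1/(B:ℂ)‖ :=
            norm_add_le _ _
        _ = ‖z‖ + 1/(B:ℝ) := by
            rw [norm_div, norm_one, Complex.norm_natCast]
    have hle : (1+1/(B:ℝ))^B * (‖z‖)^(B-1) ≤ (‖z‖ + 1/(B:ℝ))^B := by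
      rw [← habs]
      exact pow_le_pow_left₀ (norm_nonneg _) htri B
    have hlt := mono_lemma B hB ρ hρ0 hρub hρeq (‖z‖) hgt hzlt
    linarith
  · have h1 : |ρ - (1 - 2/(B:ℝ))| ≤ 10/(B:ℝ)^2 := by
      rw [abs_le]
      constructor
      · have : (0:ℝ) ≤ 10/(B:ℝ)^2 := by positivity
        linarith
      · linarith
    calc |ρ - (1 - 2/(B:ℝ))| ≤ 10/(B:ℝ)^2 := h1
      _ = (10:ℝ)/(B:ℝ)^2 := rfl
end

section
/- Two-dimensional majorization at time 2 for the coupled pebble chains: let q_{ij} = 1/(B(B-1)) for 1 ≤ i,j ≤ B with i ≠ j (and 0 otherwise), and q⁻_{ij} = 1/(B-1)² for 1 ≤ i,j ≤ B-1 (and 0 otherwise). Then for all i₀ ≥ 1 and j₀ ≥ 1, ∑_{i ≤ i₀, j ≤ j₀} q⁻_{ij} ≥ ∑_{i ≤ i₀, j ≤ j₀} q_{ij}. -/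
private lemma filter_Icc_le (n k : ℕ) :
    (Finset.Icc 1 n).filter (· ≤ k) = Finset.Icc 1 (min n k) := by
  ext x; simp [Finset.mem_filter, Finset.mem_Icc]; omega

private lemma sum_if_le (n k : ℕ) (c : ℝ) :
    ∑ j ∈ Finset.Icc 1 n, (if j ≤ k then c else 0) = (min n k : ℕ) * c := by
  rw [← Finset.sum_filter, filter_Icc_le, Finset.sum_const, Nat.card_Icc]
  simp [nsmul_eq_mul]

/-- Two-dimensional majorization at time 2: with
`q_{ij} = 1/(B(B-1))` for `1 ≤ i,j ≤ B`, `i ≠ j` (else 0), and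
`q⁻_{ij} = 1/(B-1)²` for `1 ≤ i,j ≤ B-1` (else 0), the lower-orthant sums of `q⁻`
dominate those of `q`. -/
theorem lower_orthant_dominance_time_two (B : ℕ) (hB : 2 ≤ B)
    (i0 j0 : ℕ) (hi : 1 ≤ i0) (hj : 1 ≤ j0) :
    ∑ i ∈ Finset.Icc 1 i0, ∑ j ∈ Finset.Icc 1 j0,
        (if i ≤ B ∧ j ≤ B ∧ i ≠ j then (1 : ℝ) / ((B : ℝ) * ((B : ℝ) - 1)) else 0)
      ≤ ∑ i ∈ Finset.Icc 1 i0, ∑ j ∈ Finset.Icc 1 j0,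
        (if i ≤ B - 1 ∧ j ≤ B - 1 then (1 : ℝ) / ((B : ℝ) - 1) ^ 2 else 0) := by
  set c : ℝ := (1 : ℝ) / ((B : ℝ) * ((B : ℝ) - 1)) with hc
  set c' : ℝ := (1 : ℝ) / ((B : ℝ) - 1) ^ 2 with hc'
  set a := min i0 B with ha
  set b := min j0 B with hb
  set a' := min i0 (B - 1) with ha'
  set b' := min j0 (B - 1) with hb'
  have hba : min i0 b = min a b := by omega
  -- inner sum for LHS
  have hinner : ∀ i ∈ Finset.Icc 1 i0,
      (∑ j ∈ Finset.Icc 1 j0, (if i ≤ B ∧ j ≤ B ∧ i ≠ j then c else 0))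
      = (if i ≤ B then (b : ℕ) * c else 0) - (if i ≤ b then c else 0) := by
    intro i hi'
    simp only [Finset.mem_Icc] at hi'
    have key : ∀ j, (if i ≤ B ∧ j ≤ B ∧ i ≠ j then c else 0)
        = (if i ≤ B then (if j ≤ B then c else 0) else 0)
          - (if j = i then (if i ≤ B then c else 0) else 0) := by
      intro j
      by_cases h1 : i ≤ B <;> by_cases h3 : j = i
      · subst h3; simp [h1]
      · by_cases h2 : j ≤ B <;> simp [h1, h2, h3, Ne.symm h3]
      · subst h3; simp [h1]
      · by_cases h2 : j ≤ B <;> simp [h1, h2, h3]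
    rw [Finset.sum_congr rfl (fun j _ => key j), Finset.sum_sub_distrib]
    by_cases hiB : i ≤ B
    · simp only [hiB, if_true]
      rw [sum_if_le, Finset.sum_ite_eq' (Finset.Icc 1 j0) i (fun _ => c)]
      have : i ∈ Finset.Icc 1 j0 ↔ i ≤ b := by
        simp [Finset.mem_Icc]; omega
      rw [if_congr this rfl rfl]
    · have hib : ¬ i ≤ b := by omega
      simp [hiB, hib]
  have hinner' : ∀ i ∈ Finset.Icc 1 i0,
      (∑ j ∈ Finset.Icc 1 j0, (if i ≤ B - 1 ∧ j ≤ B - 1 then c' else 0))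
      = (if i ≤ B - 1 then (b' : ℕ) * c' else 0) := by
    intro i _
    by_cases h : i ≤ B - 1
    · simp only [h, true_and, if_true]
      exact sum_if_le _ _ _
    · simp [h]
  rw [Finset.sum_congr rfl hinner, Finset.sum_congr rfl hinner',
    Finset.sum_sub_distrib, sum_if_le, sum_if_le, sum_if_le, hba]
  -- now a purely arithmetic goal
  have hkey : (a * b - min a b) * (B - 1) ≤ a' * b' * B := by
    rcases le_or_gt i0 (B - 1) with h1 | h1 <;> rcases le_or_gt j0 (B - 1) with h2 | h2
    · have e5 : min a b = min i0 j0 := by omega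
      have e1 : a = i0 := by omega
      have e2 : b = j0 := by omega
      have e3 : a' = i0 := by omega
      have e4 : b' = j0 := by omega
      rw [e5, e1, e2, e3, e4]
      have s1 : (i0 * j0 - min i0 j0) * (B - 1) ≤ (i0 * j0) * (B - 1) :=
        Nat.mul_le_mul_right _ (Nat.sub_le _ _)
      have s2 : (i0 * j0) * (B - 1) ≤ i0 * j0 * B := Nat.mul_le_mul_left _ (by omega)
      exact le_trans s1 s2
    · have e5 : min a b = i0 := by omega
      have e1 : a = i0 := by omega
      have e2 : b = B := by omega
      have e3 : a' = i0 := by omega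
      have e4 : b' = B - 1 := by omega
      rw [e5, e1, e2, e3, e4]
      have h : i0 * B - i0 = i0 * (B - 1) := by
        rw [Nat.mul_sub, Nat.mul_one]
      rw [h]
      exact Nat.mul_le_mul_left _ (by omega)
    · have e5 : min a b = j0 := by omega
      have e1 : a = B := by omega
      have e2 : b = j0 := by omega
      have e3 : a' = B - 1 := by omega
      have e4 : b' = j0 := by omega
      rw [e5, e1, e2, e3, e4]
      have h : B * j0 - j0 = (B - 1) * j0 := by
        rw [Nat.sub_mul, Nat.one_mul]
      rw [h]
      exact Nat.mul_le_mul_left _ (by omega)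
    · have e5 : min a b = B := by omega
      have e1 : a = B := by omega
      have e2 : b = B := by omega
      have e3 : a' = B - 1 := by omega
      have e4 : b' = B - 1 := by omega
      rw [e5, e1, e2, e3, e4]
      have h : B * B - B = B * (B - 1) := by
        rw [Nat.mul_sub, Nat.mul_one]
      rw [h]
      have h2 : B * (B - 1) * (B - 1) = (B - 1) * (B - 1) * B := by ring
      rw [h2]
  -- real arithmetic
  have hm : min a b ≤ a * b := by
    have h1 : min a b ≤ a := min_le_left _ _
    have h2 : 1 ≤ b := by omega
    calc min a b ≤ a := h1
      _ = a * 1 := (Nat.mul_one a).symm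
      _ ≤ a * b := Nat.mul_le_mul_left _ h2
  have hBR : (2 : ℝ) ≤ (B : ℝ) := by exact_mod_cast hB
  have hkeyR : ((a : ℝ) * b - min a b) * ((B : ℝ) - 1) ≤ (a' : ℝ) * b' * B := by
    have := hkey
    have hc1 : ((a * b - min a b : ℕ) : ℝ) = (a : ℝ) * b - (min a b : ℕ) := by
      push_cast [Nat.cast_sub hm]
      ring
    have hc2 : (((B : ℕ) - 1 : ℕ) : ℝ) = (B : ℝ) - 1 := by
      push_cast [Nat.cast_sub (by omega : 1 ≤ B)]
      ring
    calc ((a : ℝ) * b - min a b) * ((B : ℝ) - 1)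
        = (((a * b - min a b) * (B - 1) : ℕ) : ℝ) := by push_cast [Nat.cast_sub hm, Nat.cast_sub (by omega : 1 ≤ B)]; ring
      _ ≤ ((a' * b' * B : ℕ) : ℝ) := by exact_mod_cast this
      _ = (a' : ℝ) * b' * B := by push_cast; ring
  rw [hc, hc']
  have hpos1 : (0 : ℝ) < (B : ℝ) * ((B : ℝ) - 1) := by nlinarith
  have hpos2 : (0 : ℝ) < ((B : ℝ) - 1) ^ 2 := by nlinarith
  rw [show (a : ℝ) * ((b : ℝ) * (1 / ((B : ℝ) * ((B : ℝ) - 1)))) - (min a b : ℕ) * (1 / ((B : ℝ) * ((B : ℝ) - 1)))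
      = ((a : ℝ) * b - (min a b : ℕ)) / ((B : ℝ) * ((B : ℝ) - 1)) by ring,
    show (a' : ℝ) * ((b' : ℝ) * (1 / ((B : ℝ) - 1) ^ 2)) = ((a' : ℝ) * b') / ((B : ℝ) - 1) ^ 2 by ring]
  rw [div_le_div_iff₀ hpos1 hpos2]
  nlinarith [hkeyR, mul_nonneg (Nat.cast_nonneg (α := ℝ) a') (Nat.cast_nonneg (α := ℝ) b')]
end
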